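/- arXiv:1011.2372 — 10 statements merged into one kernel-verified Lean document; each statement's English description precedes it below -/
import Mathlib

section
/- If B is a boundary for a real Banach space X (i.e., B ⊆ S_{X*} and every x ∈ X attains its norm at some b ∈ B), then for every bounded sequence (x_n) in X, sup_{x* ∈ B} limsup_n x*(x_n) = sup_{x* ∈ B_{X*}} limsup_n x*(x_n). -/
/-!
One inequality is `B ⊆ B_{X*}`. For the other, let `‖f‖ ≤ 1` and `r < t < limsup f(xₙ)`.
Along a subsequence `y` of `x` we have `f(yⱼ) > t`, so every countable convex combination `u`
of the `yⱼ` satisfies `‖u‖ ≥ f(u) ≥ t`. Choose greedily `vₖ` among countable convex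
combinations of `{yⱼ : j > k}` nearly minimising `‖∑_{i<k} 2^{-(i+1)} vᵢ + 2^{-k} vₖ‖`, and let
`b ∈ B` norm `w = ∑ᵢ 2^{-(i+1)} vᵢ`. Writing `w = ∑_{i<k} 2^{-(i+1)} vᵢ + 2^{-k} uₖ`, the tail
`uₖ` is a competitor for `vₖ`, whence `b(vₖ) ≤ b(uₖ) + ε 2^{-k}` and `b(uₖ) ≥ t - ε` for all `k`.
Since `2 b(uₖ) = b(vₖ) + b(uₖ₊₁)` and `b(uₖ)` is bounded, `b(vₖ) ≥ t - ε` infinitely often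
(otherwise `b(uₖ) - (t - ε)` would eventually more than double at each step), so `b(yⱼ) > r`
infinitely often and `limsup b(xₙ) ≥ r`.
-/

noncomputable section
open Filter Topology Set NormedSpace Pointwise

variable {X : Type*} [NormedAddCommGroup X] [NormedSpace ℝ X] [CompleteSpace X]

/-- `B` is a boundary for `X`: a subset of the dual unit sphere on which every
element of `X` attains its norm. -/
def IsBoundary (B : Set (StrongDual ℝ X)) : Prop :=
  (∀ f ∈ B, ‖f‖ = 1) ∧ ∀ x : X, ∃ f ∈ B, f x = ‖x‖

/-- The closure of `S` in the topology `σ_B` of pointwise convergence on `B`. -/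
def sigmaClosure (B : Set (StrongDual ℝ X)) (S : Set X) : Set X :=
  {x | ∀ ε > (0 : ℝ), ∀ F : Finset (StrongDual ℝ X), (F : Set (StrongDual ℝ X)) ⊆ B →
    ∃ y ∈ S, ∀ f ∈ F, |f x - f y| < ε}

theorem frequently_le_of_two_mul_eq_add {a c : ℕ → ℝ} {C s : ℝ} (ha : ∀ k, a k ≤ C)
    (hs : ∀ k, s ≤ a k) (hac : ∀ k, 2 * a k = c k + a (k + 1)) :
    ∃ᶠ k in atTop, s ≤ c k := by
  by_contra h
  obtain ⟨K, hK⟩ := eventually_atTop.1 (not_frequently.1 h)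
  have hgrow : ∀ n, 2 * (a (K + 1 + n) - s) ≤ a (K + 1 + (n + 1)) - s := fun n => by
    have := not_le.1 (hK (K + 1 + n) (by omega))
    show _ ≤ a (K + 1 + n + 1) - s
    linarith [hac (K + 1 + n)]
  have hpos : 0 < a (K + 1 + 0) - s := by
    have := not_le.1 (hK K le_rfl)
    linarith [hac K, hs K]
  obtain ⟨n, hn⟩ :=
    ((tendsto_atTop_of_geom_le hpos one_lt_two hgrow).eventually_gt_atTop (C - s)).exists
  linarith [ha (K + 1 + n)]

theorem exists_lt_add_of_bddBelow {α : Type*} {S : Set α} (hS : S.Nonempty) {g : α → ℝ}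
    (hg : BddBelow (g '' S)) {δ : ℝ} (hδ : 0 < δ) : ∃ v ∈ S, ∀ z ∈ S, g v < g z + δ := by
  obtain ⟨_, ⟨v, hv, rfl⟩, hlt⟩ := Real.lt_sInf_add_pos (hS.image g) hδ
  exact ⟨v, hv, fun z hz => hlt.trans_le (by gcongr; exact csInf_le hg ⟨z, hz, rfl⟩)⟩

section

variable {E : Type*} [NormedAddCommGroup E] [NormedSpace ℝ E]

def tailSigmaConvexHull (y : ℕ → E) (k : ℕ) : Set E :=
  {u | ∃ l : ℕ → ℝ, (∀ j, 0 ≤ l j) ∧ (∀ j < k, l j = 0) ∧ HasSum l 1 ∧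
    HasSum (fun j => l j • y j) u}

theorem apply_mem_tailSigmaConvexHull (y : ℕ → E) (k : ℕ) :
    y k ∈ tailSigmaConvexHull y k := by
  refine ⟨Pi.single k 1, fun j => ?_, fun j hj => Pi.single_eq_of_ne hj.ne _,
    hasSum_pi_single k 1, ?_⟩
  · by_cases h : j = k <;> simp [h]
  · convert hasSum_pi_single k (y k) using 1
    ext j
    by_cases h : j = k <;> simp [h]

theorem tailSigmaConvexHull_anti (y : ℕ → E) : Antitone (tailSigmaConvexHull y) := by
  rintro m k hmk u ⟨l, hl0, hlk, hl1, hlu⟩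
  exact ⟨l, hl0, fun j hj => hlk j (hj.trans_le hmk), hl1, hlu⟩

theorem norm_le_of_mem_tailSigmaConvexHull {y : ℕ → E} {C : ℝ} (hy : ∀ j, ‖y j‖ ≤ C)
    {k : ℕ} {u : E} (hu : u ∈ tailSigmaConvexHull y k) : ‖u‖ ≤ C := by
  obtain ⟨l, hl0, -, hl1, hlu⟩ := hu
  simpa using hlu.norm_le_of_bounded (hl1.mul_right C) fun j => by
    rw [norm_smul, Real.norm_of_nonneg (hl0 j)]
    exact mul_le_mul_of_nonneg_left (hy j) (hl0 j)

theorem apply_le_of_mem_tailSigmaConvexHull {y : ℕ → E} {k : ℕ} {u : E}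
    (hu : u ∈ tailSigmaConvexHull y k) (f : StrongDual ℝ E) {s : ℝ}
    (hs : ∀ j ≥ k, f (y j) ≤ s) : f u ≤ s := by
  obtain ⟨l, hl0, hlk, hl1, hlu⟩ := hu
  have hfu : HasSum (fun j => l j * f (y j)) (f u) := by simpa using f.hasSum hlu
  have hle : ∀ j, l j * f (y j) ≤ l j * s := fun j => by
    rcases lt_or_ge j k with hj | hj
    · simp [hlk j hj]
    · exact mul_le_mul_of_nonneg_left (hs j hj) (hl0 j)
  simpa using hasSum_le hle hfu (hl1.mul_right s)

theorem le_apply_of_mem_tailSigmaConvexHull {y : ℕ → E} {k : ℕ} {u : E}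
    (hu : u ∈ tailSigmaConvexHull y k) (f : StrongDual ℝ E) {s : ℝ}
    (hs : ∀ j ≥ k, s ≤ f (y j)) : s ≤ f u := by
  simpa using apply_le_of_mem_tailSigmaConvexHull hu (-f) (s := -s) fun j hj => by
    simpa using hs j hj

theorem frequently_lt_apply_of_frequently_le_apply {y v : ℕ → E}
    (hv : ∀ k, v k ∈ tailSigmaConvexHull y (k + 1)) {f : StrongDual ℝ E} {r s : ℝ}
    (hrs : r < s) (h : ∃ᶠ k in atTop, s ≤ f (v k)) : ∃ᶠ j in atTop, r < f (y j) := by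
  refine frequently_atTop.2 fun K => ?_
  obtain ⟨k, hk, hvk⟩ := frequently_atTop.1 h K
  by_contra! hK
  exact (apply_le_of_mem_tailSigmaConvexHull (hv k) f fun j hj => hK j (by omega)).not_gt
    (hrs.trans_le hvk)

theorem exists_mem_tailSigmaConvexHull_hasSum [CompleteSpace E] {y : ℕ → E} {C : ℝ}
    (hy : ∀ j, ‖y j‖ ≤ C) {k : ℕ} {v : ℕ → E} (hv : ∀ i, v i ∈ tailSigmaConvexHull y k)
    {c : ℕ → ℝ} (hc0 : ∀ i, 0 ≤ c i) (hc : HasSum c 1) :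
    ∃ u ∈ tailSigmaConvexHull y k, HasSum (fun i => c i • v i) u := by
  choose l hl0 hlk hl1 hlv using hv
  set F : ℕ × ℕ → ℝ := fun p => c p.1 * l p.1 p.2
  have hF0 : 0 ≤ F := fun p => mul_nonneg (hc0 _) (hl0 _ _)
  have hrows : ∀ i, HasSum (fun j => F (i, j)) (c i) := fun i => by
    simpa using (hl1 i).mul_left (c i)
  have hFs : Summable F := (summable_prod_of_nonneg hF0).2
    ⟨fun i => (hrows i).summable, by simpa only [(hrows _).tsum_eq] using hc.summable⟩
  have hF : HasSum F 1 := by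
    simpa only [(hFs.hasSum.prod_fiberwise hrows).unique hc] using hFs.hasSum
  set m : ℕ → ℝ := fun j => ∑' i, F (i, j)
  have hcols : ∀ j, HasSum (fun i => F (i, j)) (m j) := fun j =>
    (hFs.prod_symm.prod_factor j).hasSum
  have hm : HasSum m 1 :=
    ((Equiv.prodComm ℕ ℕ).hasSum_iff.2 hF).prod_fiberwise hcols
  set G : ℕ × ℕ → E := fun p => F p • y p.2
  have hG : Summable G := Summable.of_norm_bounded (hFs.mul_right C) fun p => by
    rw [norm_smul, Real.norm_of_nonneg (hF0 p)]
    exact mul_le_mul_of_nonneg_left (hy _) (hF0 p)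
  have hGrows : ∀ i, HasSum (fun j => G (i, j)) (c i • v i) := fun i => by
    simpa [G, F, mul_smul] using (hlv i).const_smul (c i)
  have hGcols : ∀ j, HasSum (fun i => G (i, j)) (m j • y j) := fun j =>
    (hcols j).smul_const (y j)
  refine ⟨∑' p, G p, ⟨m, fun j => tsum_nonneg fun i => hF0 _, fun j hj => ?_, hm,
    ((Equiv.prodComm ℕ ℕ).hasSum_iff.2 hG.hasSum).prod_fiberwise hGcols⟩,
    hG.hasSum.prod_fiberwise hGrows⟩
  simp [m, F, hlk _ j hj]

open Finset in
theorem exists_seq_almost_minimizing (y : ℕ → E) {δ : ℕ → ℝ} (hδ : ∀ k, 0 < δ k) :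
    ∃ v : ℕ → E, ∀ k, v k ∈ tailSigmaConvexHull y (k + 1) ∧
      ∀ z ∈ tailSigmaConvexHull y (k + 1),
        ‖∑ i ∈ range k, (2⁻¹ : ℝ) ^ (i + 1) • v i + (2⁻¹ : ℝ) ^ k • v k‖ <
          ‖∑ i ∈ range k, (2⁻¹ : ℝ) ^ (i + 1) • v i + (2⁻¹ : ℝ) ^ k • z‖ + δ k := by
  choose pick hpick_mem hpick using fun k (h : E) =>
    exists_lt_add_of_bddBelow ⟨_, apply_mem_tailSigmaConvexHull y (k + 1)⟩
      (g := fun z => ‖h + (2⁻¹ : ℝ) ^ k • z‖)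
      ⟨0, by rintro _ ⟨z, -, rfl⟩; exact norm_nonneg _⟩ (hδ k)
  let H : ℕ → E := fun k => Nat.rec 0 (fun n h => h + (2⁻¹ : ℝ) ^ (n + 1) • pick n h) k
  have hH : ∀ k, H k = ∑ i ∈ range k, (2⁻¹ : ℝ) ^ (i + 1) • pick i (H i) := by
    intro k
    induction k with
    | zero => rfl
    | succ k ih => rw [sum_range_succ, ← ih]
  exact ⟨fun k => pick k (H k), fun k =>
    ⟨hpick_mem k _, by simpa only [← hH] using hpick k (H k)⟩⟩

open Finset in
theorem exists_tail_sums [CompleteSpace E] {y : ℕ → E} {C : ℝ} (hy : ∀ j, ‖y j‖ ≤ C)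
    {v : ℕ → E} (hv : ∀ k, v k ∈ tailSigmaConvexHull y (k + 1)) :
    ∃ u : ℕ → E, (∀ k, u k ∈ tailSigmaConvexHull y (k + 1)) ∧
      ∀ k, u 0 = ∑ i ∈ range k, (2⁻¹ : ℝ) ^ (i + 1) • v i + (2⁻¹ : ℝ) ^ k • u k := by
  have hc : HasSum (fun i : ℕ => (2⁻¹ : ℝ) ^ (i + 1)) 1 := by
    convert hasSum_geometric_two' 1 using 2 with i
    rw [pow_succ, inv_pow]
    ring
  have htail : ∀ k, ∃ u ∈ tailSigmaConvexHull y (k + 1),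
      HasSum (fun i => (2⁻¹ : ℝ) ^ (i + 1) • v (i + k)) u := fun k =>
    exists_mem_tailSigmaConvexHull_hasSum hy
      (fun i => tailSigmaConvexHull_anti y (by omega) (hv (i + k))) (fun i => by positivity) hc
  choose u hu hsum using htail
  refine ⟨u, hu, fun k => ?_⟩
  have hdrop := (hasSum_nat_add_iff' k).2 (hsum 0)
  simp only [add_zero] at hdrop
  have hscaled :
      HasSum (fun i => (2⁻¹ : ℝ) ^ (i + k + 1) • v (i + k)) ((2⁻¹ : ℝ) ^ k • u k) := by
    convert (hsum k).const_smul ((2⁻¹ : ℝ) ^ k) using 2 with i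
    rw [smul_smul, ← pow_add]
    ring_nf
  rw [← sub_eq_iff_eq_add']
  exact hdrop.unique hscaled

theorem abs_apply_le_norm_of_norm_le_one {f : StrongDual ℝ E} (hf : ‖f‖ ≤ 1) (z : E) :
    |f z| ≤ ‖z‖ := by
  simpa [Real.norm_eq_abs] using f.le_of_opNorm_le hf z

theorem apply_le_norm_of_norm_le_one {f : StrongDual ℝ E} (hf : ‖f‖ ≤ 1) (z : E) :
    f z ≤ ‖z‖ :=
  (le_abs_self _).trans (abs_apply_le_norm_of_norm_le_one hf z)

theorem isBoundedUnder_le_apply_of_norm_le_one {ι : Type*} (l : Filter ι) {x : ι → E} {C : ℝ}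
    (hx : ∀ n, ‖x n‖ ≤ C) {f : StrongDual ℝ E} (hf : ‖f‖ ≤ 1) :
    IsBoundedUnder (· ≤ ·) l fun n => f (x n) :=
  isBoundedUnder_of ⟨C, fun n => (apply_le_norm_of_norm_le_one hf _).trans (hx n)⟩

theorem isCoboundedUnder_le_apply_of_norm_le_one {ι : Type*} (l : Filter ι) [l.NeBot]
    {x : ι → E} {C : ℝ} (hx : ∀ n, ‖x n‖ ≤ C) {f : StrongDual ℝ E} (hf : ‖f‖ ≤ 1) :
    IsCoboundedUnder (· ≤ ·) l fun n => f (x n) :=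
  isCoboundedUnder_le_of_le l (x := -C) fun n =>
    neg_le_of_abs_le ((abs_apply_le_norm_of_norm_le_one hf _).trans (hx n))

end

open Finset in
theorem IsBoundary.exists_frequently_lt {B : Set (StrongDual ℝ X)} (hB : IsBoundary B)
    {y : ℕ → X} {C : ℝ} (hy : ∀ j, ‖y j‖ ≤ C) {t r : ℝ}
    (ht : ∀ u ∈ tailSigmaConvexHull y 0, t ≤ ‖u‖) (hr : r < t) :
    ∃ b ∈ B, ∃ᶠ j in atTop, r < b (y j) := by
  obtain ⟨ε, hε, hrε⟩ : ∃ ε > 0, r < t - ε := ⟨(t - r) / 2, by linarith, by linarith⟩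
  obtain ⟨v, hv⟩ := exists_seq_almost_minimizing y
    (δ := fun k => ε * ((2⁻¹ : ℝ) ^ k) ^ 2 / 2) fun k => by positivity
  choose hv_mem hv_min using hv
  obtain ⟨u, hu_mem, hu⟩ := exists_tail_sums hy hv_mem
  obtain ⟨b, hbB, hbu⟩ := hB.2 (u 0)
  have hb_le := apply_le_norm_of_norm_le_one (hB.1 b hbB).le
  have hpos (k : ℕ) : 0 < (2⁻¹ : ℝ) ^ k := by positivity
  have hbu_eq (k : ℕ) :
      b (u 0) = ∑ i ∈ range k, (2⁻¹ : ℝ) ^ (i + 1) * b (v i) + (2⁻¹ : ℝ) ^ k * b (u k) := by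
    conv_lhs => rw [hu k]
    simp
  have hnext (k : ℕ) : 2 * b (u k) = b (v k) + b (u (k + 1)) := by
    have e := (hbu_eq k).symm.trans (hbu_eq (k + 1))
    rw [sum_range_succ, add_assoc, add_right_inj, pow_succ] at e
    refine mul_left_cancel₀ (hpos k).ne' ?_
    linear_combination 2 * e
  have hclose (k : ℕ) : b (v k) < b (u k) + ε * (2⁻¹ : ℝ) ^ k / 2 := by
    -- `u k` is a competitor in the near-minimality of `v k`, and `b` norms `u 0`.
    have hmin := hv_min k (u k) (hu_mem k)
    rw [← hu k, ← hbu] at hmin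
    have hnorm := hb_le (∑ i ∈ range k, (2⁻¹ : ℝ) ^ (i + 1) • v i + (2⁻¹ : ℝ) ^ k • v k)
    simp only [map_add, map_sum, map_smul, smul_eq_mul] at hnorm
    have := hbu_eq k
    refine (mul_lt_mul_iff_right₀ (hpos k)).1 ?_
    linarith
  have hlower (k : ℕ) : b (u 0) - ε * (1 - (2⁻¹ : ℝ) ^ k) ≤ b (u k) := by
    induction k with
    | zero => simp
    | succ k ih => rw [pow_succ]; linarith [hnext k, hclose k]
  have hfreq : ∃ᶠ k in atTop, t - ε ≤ b (v k) := by
    refine frequently_le_of_two_mul_eq_add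
      (fun k => (hb_le _).trans (norm_le_of_mem_tailSigmaConvexHull hy (hu_mem k)))
      (fun k => ?_) hnext
    have ht0 := ht (u 0) (tailSigmaConvexHull_anti y (Nat.zero_le 1) (hu_mem 0))
    linarith [hlower k, mul_pos hε (hpos k)]
  exact ⟨b, hbB, frequently_lt_apply_of_frequently_le_apply hv_mem hrε hfreq⟩

theorem IsBoundary.exists_frequently_lt_of_lt_limsup {B : Set (StrongDual ℝ X)}
    (hB : IsBoundary B) {x : ℕ → X} {C : ℝ} (hx : ∀ n, ‖x n‖ ≤ C) {f : StrongDual ℝ X}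
    (hf : ‖f‖ ≤ 1) {r : ℝ} (hr : r < limsup (fun n => f (x n)) atTop) :
    ∃ b ∈ B, ∃ᶠ n in atTop, r < b (x n) := by
  obtain ⟨t, hrt, htL⟩ := exists_between hr
  obtain ⟨φ, hφ, hφt⟩ := extraction_of_frequently_atTop
    (frequently_lt_of_lt_limsup (isCoboundedUnder_le_apply_of_norm_le_one atTop hx hf) htL)
  have ht : ∀ u ∈ tailSigmaConvexHull (x ∘ φ) 0, t ≤ ‖u‖ := fun u hu =>
    (le_apply_of_mem_tailSigmaConvexHull hu f fun j _ => (hφt j).le).trans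
      (apply_le_norm_of_norm_le_one hf u)
  obtain ⟨b, hbB, hb⟩ := hB.exists_frequently_lt (fun j => hx (φ j)) ht hrt
  exact ⟨b, hbB, hφ.tendsto_atTop.frequently hb⟩

theorem simons_equality (B : Set (StrongDual ℝ X)) (hB : IsBoundary B)
    (x : ℕ → X) (C : ℝ) (hx : ∀ n, ‖x n‖ ≤ C) :
    sSup {r : ℝ | ∃ f ∈ B, r = limsup (fun n => f (x n)) atTop} =
      sSup {r : ℝ | ∃ f : StrongDual ℝ X, ‖f‖ ≤ 1 ∧ r = limsup (fun n => f (x n)) atTop} := by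
  set SB := {r : ℝ | ∃ f ∈ B, r = limsup (fun n => f (x n)) atTop}
  set SBall := {r : ℝ | ∃ f : StrongDual ℝ X, ‖f‖ ≤ 1 ∧ r = limsup (fun n => f (x n)) atTop}
  have hsub : SB ⊆ SBall := by
    rintro _ ⟨f, hf, rfl⟩
    exact ⟨f, (hB.1 f hf).le, rfl⟩
  have hne : SB.Nonempty :=
    let ⟨f, hf, _⟩ := hB.2 0
    ⟨_, f, hf, rfl⟩
  have hbdd : BddAbove SBall := ⟨C, by
    rintro _ ⟨f, hf, rfl⟩
    exact limsup_le_of_le (isCoboundedUnder_le_apply_of_norm_le_one atTop hx hf)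
      (Eventually.of_forall fun n => (apply_le_norm_of_norm_le_one hf _).trans (hx n))⟩
  refine le_antisymm (csSup_le_csSup hbdd hne hsub) (csSup_le (hne.mono hsub) ?_)
  rintro _ ⟨f, hf, rfl⟩
  refine le_of_forall_lt_imp_le_of_dense fun r hr => ?_
  obtain ⟨b, hbB, hb⟩ := hB.exists_frequently_lt_of_lt_limsup hx hf hr
  have hbr : r ≤ limsup (fun n => b (x n)) atTop :=
    le_limsup_of_frequently_le (hb.mono fun _ => le_of_lt)
      (isBoundedUnder_le_apply_of_norm_le_one atTop hx (hB.1 b hbB).le)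
  exact hbr.trans (le_csSup (hbdd.mono hsub) ⟨b, hbB, rfl⟩)
end
end

section
/- If B is a boundary for X, then a bounded sequence (x_n) in X converges weakly to x ∈ X if and only if b(x_n) → b(x) for every b ∈ B. -/
/-!
Simons' argument. Let `(y_k)` be bounded, `‖φ‖ ≤ 1` and `φ (y_k) ≥ c` for all `k`, and let `C_n`
be the closed convex hull of `{y_k | k ≥ n}`. Choose greedily `g_n ∈ C_n` nearly minimising
`‖h_n + 2⁻⁽ⁿ⁺¹⁾ g_n‖`, where `h_n = ∑_{k<n} 2⁻⁽ᵏ⁺¹⁾ g_k`, and put `g = ∑ 2⁻⁽ᵏ⁺¹⁾ g_k ∈ C_0`, so that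
`‖g‖ ≥ φ g ≥ c`. The tail `2ⁿ (g - h_n)` is again in `C_n`; comparing `g_n` with it gives
`‖h_{n+1}‖ ≤ (‖h_n‖ + ‖g‖) / 2 + ε 4⁻⁽ⁿ⁺¹⁾`, hence `2ⁿ (‖g‖ - ‖h_n‖) ≥ ‖g‖ - ε`. A functional
`b ∈ B` attaining its norm at `g` therefore satisfies `b (2ⁿ (g - h_n)) ≥ c - ε` for every `n`,
so `b (y_k) ≥ c - 2ε` for infinitely many `k`. Applied along a subsequence on which a functional
stays away from its limit, this contradicts `b (x_k - x₀) → 0`.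
-/

noncomputable section
open Filter Topology Set NormedSpace Pointwise

variable {X : Type*} [NormedAddCommGroup X] [NormedSpace ℝ X] [CompleteSpace X]

theorem Convex.mem_of_hasSum {E ι : Type*} [AddCommGroup E] [Module ℝ E] [TopologicalSpace E]
    [ContinuousSMul ℝ E] {C : Set E} (hconv : Convex ℝ C) (hclosed : IsClosed C)
    {w : ι → ℝ} {g : ι → E} {z : E} (hw0 : ∀ i, 0 ≤ w i) (hw1 : HasSum w 1)
    (hg : ∀ i, g i ∈ C) (hz : HasSum (fun i => w i • g i) z) : z ∈ C := by
  have hcm : Tendsto (fun s : Finset ι => s.centerMass w g) atTop (𝓝 z) := by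
    simpa [Finset.centerMass] using (hw1.inv₀ one_ne_zero).smul hz
  refine hclosed.mem_of_tendsto hcm ?_
  filter_upwards [hw1.eventually (lt_mem_nhds one_pos)] with s hs
  exact hconv.centerMass_mem (fun i _ => hw0 i) hs (fun i _ => hg i)

theorem Set.Nonempty.exists_forall_le_add {α : Type*} {s : Set α} (hs : s.Nonempty) {f : α → ℝ}
    (hf : BddBelow (f '' s)) {δ : ℝ} (hδ : 0 < δ) : ∃ z ∈ s, ∀ z' ∈ s, f z ≤ f z' + δ := by
  obtain ⟨_, ⟨z, hz, rfl⟩, hlt⟩ := Real.lt_sInf_add_pos (hs.image f) hδ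
  exact ⟨z, hz, fun z' hz' => by linarith [csInf_le hf (mem_image_of_mem f hz')]⟩

theorem hasSum_inv_two_pow_succ : HasSum (fun k : ℕ => ((2 : ℝ) ^ (k + 1))⁻¹) 1 := by
  convert hasSum_geometric_two' 1 using 2 with k
  rw [pow_succ]
  field_simp

theorem le_two_pow_mul_sub_of_le_half_add {a : ℕ → ℝ} {S ε : ℝ} (h0 : a 0 = 0)
    (hrec : ∀ n, a (n + 1) ≤ (a n + S) / 2 + ε / 4 ^ (n + 1)) (n : ℕ) :
    S - (1 - (2 ^ n)⁻¹) * ε ≤ 2 ^ n * (S - a n) := by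
  induction n with
  | zero => simp [h0]
  | succ n ih =>
    have hrec' := hrec n
    rw [show (4 : ℝ) ^ (n + 1) = (2 ^ n) ^ 2 * 4 by
      rw [← pow_mul, pow_succ, mul_comm n 2, pow_mul]; norm_num] at hrec'
    rw [pow_succ]
    have ht : (0 : ℝ) < 2 ^ n := by positivity
    generalize (2 : ℝ) ^ n = t at *
    have hs : t * 2 * a (n + 1) ≤ t * a n + t * S + t⁻¹ * ε / 2 := by
      have := mul_le_mul_of_nonneg_left hrec' (by positivity : (0 : ℝ) ≤ t * 2)
      have hscale : t * 2 * (ε / (t ^ 2 * 4)) = t⁻¹ * ε / 2 := by field_simp; ring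
      rw [mul_add, hscale] at this
      linarith
    rw [mul_inv, show (2 : ℝ)⁻¹ = 1 / 2 by norm_num]
    linarith

section NormedSpace

variable {E : Type*} [NormedAddCommGroup E] [NormedSpace ℝ E]

theorem StrongDual.le_of_mem_closedConvexHull {f : StrongDual ℝ E} {s : Set E} {c : ℝ}
    (h : ∀ x ∈ s, f x ≤ c) {z : E} (hz : z ∈ closedConvexHull ℝ s) : f z ≤ c :=
  closedConvexHull_min h (convex_halfSpace_le f.isLinear c)
    (isClosed_le f.continuous continuous_const) hz

theorem norm_add_smul_two_pow_smul_sub_le (h G : E) (n : ℕ) :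
    ‖h + (2 ^ (n + 1) : ℝ)⁻¹ • (2 ^ n : ℝ) • (G - h)‖ ≤ (‖h‖ + ‖G‖) / 2 := by
  have hmid : h + (2 ^ (n + 1) : ℝ)⁻¹ • (2 ^ n : ℝ) • (G - h) = (2⁻¹ : ℝ) • (h + G) := by
    rw [smul_smul, pow_succ, mul_inv, mul_right_comm, inv_mul_cancel₀ (by positivity), one_mul]
    module
  rw [hmid, norm_smul]
  have := norm_add_le h G
  norm_num
  linarith

variable (pick : ℕ → E → E)

def simonsPartialSum : ℕ → E
  | 0 => 0
  | n + 1 => simonsPartialSum n + (2 ^ (n + 1) : ℝ)⁻¹ • pick n (simonsPartialSum n)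

def simonsTerm (n : ℕ) : E := pick n (simonsPartialSum pick n)

theorem simonsPartialSum_eq_sum (n : ℕ) :
    simonsPartialSum pick n = ∑ k ∈ Finset.range n, (2 ^ (k + 1) : ℝ)⁻¹ • simonsTerm pick k := by
  induction n with
  | zero => rfl
  | succ n ih => rw [Finset.sum_range_succ, ← ih]; rfl

theorem hasSum_simonsTerm_tail {G : E}
    (hG : HasSum (fun k => (2 ^ (k + 1) : ℝ)⁻¹ • simonsTerm pick k) G) (n : ℕ) :
    HasSum (fun j => (2 ^ (j + 1) : ℝ)⁻¹ • simonsTerm pick (n + j))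
      ((2 ^ n : ℝ) • (G - simonsPartialSum pick n)) := by
  rw [simonsPartialSum_eq_sum]
  convert ((hasSum_nat_add_iff' n).2 hG).const_smul (2 ^ n : ℝ) using 2 with j
  rw [smul_smul, add_comm n j]
  congr 1
  field_simp
  ring

end NormedSpace

theorem IsBoundary.exists_forall_exists_norm_sub_le {B : Set (StrongDual ℝ X)} (hB : IsBoundary B)
    {C : ℕ → Set X} (hanti : Antitone C) (hne : ∀ n, (C n).Nonempty)
    (hconv : ∀ n, Convex ℝ (C n)) (hclosed : ∀ n, IsClosed (C n)) {M : ℝ}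
    (hM : ∀ z ∈ C 0, ‖z‖ ≤ M) {ε : ℝ} (hε : 0 < ε) :
    ∃ g ∈ C 0, ∃ b ∈ B, ∀ n, ∃ z ∈ C n, ‖g‖ - ε ≤ b z := by
  choose pick hpick_mem hpick_le using fun n (h : X) =>
    (hne n).exists_forall_le_add (f := fun z => ‖h + (2 ^ (n + 1) : ℝ)⁻¹ • z‖)
      ⟨0, by rintro _ ⟨z, -, rfl⟩; positivity⟩ (by positivity : 0 < ε / 4 ^ (n + 1))
  set h := simonsPartialSum pick
  have hterm_mem (k : ℕ) : simonsTerm pick k ∈ C k := hpick_mem k _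
  have hsum : Summable fun k => (2 ^ (k + 1) : ℝ)⁻¹ • simonsTerm pick k := by
    refine Summable.of_norm_bounded (hasSum_inv_two_pow_succ.summable.mul_right M) fun k => ?_
    rw [norm_smul, Real.norm_of_nonneg (by positivity)]
    gcongr
    exact hM _ (hanti k.zero_le (hterm_mem k))
  set G := ∑' k, (2 ^ (k + 1) : ℝ)⁻¹ • simonsTerm pick k
  have htail (n : ℕ) : (2 ^ n : ℝ) • (G - h n) ∈ C n :=
    (hconv n).mem_of_hasSum (hclosed n) (fun j => by positivity) hasSum_inv_two_pow_succ
      (fun j => hanti (Nat.le_add_right n j) (hterm_mem (n + j)))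
      (hasSum_simonsTerm_tail pick hsum.hasSum n)
  have hrec (n : ℕ) : ‖h (n + 1)‖ ≤ (‖h n‖ + ‖G‖) / 2 + ε / 4 ^ (n + 1) :=
    (hpick_le n (h n) _ (htail n)).trans (by gcongr; exact norm_add_smul_two_pow_smul_sub_le _ _ n)
  obtain ⟨b, hbB, hbG⟩ := hB.2 G
  refine ⟨G, by simpa [h, simonsPartialSum] using htail 0, b, hbB, fun n => ⟨_, htail n, ?_⟩⟩
  have hbh : b (h n) ≤ ‖h n‖ := by
    simpa [hB.1 b hbB] using (le_abs_self _).trans (b.le_opNorm (h n))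
  have hest := le_two_pow_mul_sub_of_le_half_add (a := fun n => ‖h n‖)
    (by simp [h, simonsPartialSum]) hrec n
  calc ‖G‖ - ε ≤ ‖G‖ - (1 - (2 ^ n)⁻¹) * ε := by
        have : 0 ≤ (2 ^ n : ℝ)⁻¹ * ε := by positivity
        linarith
    _ ≤ 2 ^ n * (‖G‖ - ‖h n‖) := hest
    _ ≤ b ((2 ^ n : ℝ) • (G - h n)) := by
      rw [map_smul, map_sub, hbG, smul_eq_mul]
      gcongr

theorem IsBoundary.exists_frequently_le_apply {B : Set (StrongDual ℝ X)} (hB : IsBoundary B)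
    {y : ℕ → X} {M : ℝ} (hy : ∀ k, ‖y k‖ ≤ M) {φ : StrongDual ℝ X} (hφ : ‖φ‖ ≤ 1) {c c' : ℝ}
    (hc : ∀ k, c ≤ φ (y k)) (hc' : c' < c) : ∃ b ∈ B, ∃ᶠ k in atTop, c' ≤ b (y k) := by
  set C := fun n => closedConvexHull ℝ (y '' Ici n)
  have hCM : ∀ z ∈ C 0, ‖z‖ ≤ M := fun z hz => by
    simpa using closedConvexHull_min (by rintro _ ⟨k, -, rfl⟩; simpa using hy k)
      (convex_closedBall 0 M) Metric.isClosed_closedBall hz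
  obtain ⟨g, hg, b, hbB, hb⟩ := hB.exists_forall_exists_norm_sub_le
    (fun m n hmn => (closedConvexHull ℝ).monotone (image_mono (Ici_subset_Ici.2 hmn)))
    (fun n => ⟨y n, subset_closedConvexHull ⟨n, mem_Ici.2 le_rfl, rfl⟩⟩)
    (fun n => convex_closedConvexHull) (fun n => isClosed_closedConvexHull) hCM
    (by linarith : 0 < (c - c') / 2)
  have hcg : c ≤ ‖g‖ := by
    have : c ≤ φ g := by
      simpa using StrongDual.le_of_mem_closedConvexHull (f := -φ) (c := -c)
        (by rintro _ ⟨k, -, rfl⟩; simpa using hc k) hg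
    have : φ g ≤ ‖g‖ := (le_abs_self _).trans
      ((φ.le_opNorm g).trans (mul_le_of_le_one_left (norm_nonneg g) hφ))
    linarith
  refine ⟨b, hbB, frequently_atTop.2 fun n => ?_⟩
  by_contra! hlt
  obtain ⟨z, hz, hbz⟩ := hb n
  have := StrongDual.le_of_mem_closedConvexHull (f := b) (c := c')
    (by rintro _ ⟨k, hk, rfl⟩; exact (hlt k hk).le) hz
  linarith

theorem IsBoundary.eventually_apply_lt {B : Set (StrongDual ℝ X)} (hB : IsBoundary B)
    {y : ℕ → X} {M : ℝ} (hy : ∀ k, ‖y k‖ ≤ M)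
    (hyB : ∀ b ∈ B, Tendsto (fun k => b (y k)) atTop (𝓝 0)) {φ : StrongDual ℝ X} (hφ : ‖φ‖ ≤ 1)
    {δ : ℝ} (hδ : 0 < δ) : ∀ᶠ k in atTop, φ (y k) < δ := by
  by_contra hfreq
  obtain ⟨s, hs, hδs⟩ := extraction_of_frequently_atTop (not_eventually.1 hfreq)
  obtain ⟨b, hbB, hb⟩ := hB.exists_frequently_le_apply (fun k => hy (s k)) hφ
    (fun k => not_lt.1 (hδs k)) (half_lt_self hδ)
  have := ((hyB b hbB).comp hs.tendsto_atTop).eventually (gt_mem_nhds (half_pos hδ))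
  obtain ⟨k, hk, hk'⟩ := (hb.and_eventually this).exists
  exact hk'.not_ge hk

theorem IsBoundary.tendsto_apply_zero {B : Set (StrongDual ℝ X)} (hB : IsBoundary B)
    {y : ℕ → X} {M : ℝ} (hy : ∀ k, ‖y k‖ ≤ M)
    (hyB : ∀ b ∈ B, Tendsto (fun k => b (y k)) atTop (𝓝 0)) (φ : StrongDual ℝ X) :
    Tendsto (fun k => φ (y k)) atTop (𝓝 0) := by
  set r := ‖φ‖ + 1
  have hr : 0 < r := by positivity
  set ψ := r⁻¹ • φ
  have hψ : ‖ψ‖ ≤ 1 := by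
    rw [norm_smul, norm_inv, Real.norm_of_nonneg hr.le, inv_mul_le_one₀ hr]
    linarith
  have hψy : Tendsto (fun k => ψ (y k)) atTop (𝓝 0) := by
    refine tendsto_order.2 ⟨fun a ha => ?_, fun a ha => hB.eventually_apply_lt hy hyB hψ ha⟩
    filter_upwards [hB.eventually_apply_lt hy hyB (φ := -ψ) (by rwa [norm_neg]) (neg_pos.2 ha)]
      with k hk
    simpa [neg_lt] using hk
  simpa [ψ, hr.ne'] using hψy.const_mul r

theorem rainwater_simons (B : Set (StrongDual ℝ X)) (hB : IsBoundary B)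
    (x : ℕ → X) (C : ℝ) (hx : ∀ n, ‖x n‖ ≤ C) (x₀ : X) :
    (∀ f : StrongDual ℝ X, Tendsto (fun n => f (x n)) atTop (𝓝 (f x₀))) ↔
      (∀ b ∈ B, Tendsto (fun n => b (x n)) atTop (𝓝 (b x₀))) := by
  refine ⟨fun h b _ => h b, fun h f => ?_⟩
  have hy (n : ℕ) : ‖x n - x₀‖ ≤ C + ‖x₀‖ := (norm_sub_le _ _).trans (by gcongr; exact hx n)
  have hyB : ∀ b ∈ B, Tendsto (fun n => b (x n - x₀)) atTop (𝓝 0) := fun b hb => by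
    simpa using (h b hb).sub_const (b x₀)
  simpa using (hB.tendsto_apply_zero hy hyB f).add_const (f x₀)
end
end

section
/- A bounded subset A of a real Banach space X is weakly relatively compact if and only if for every sequence (x_n) in A, the intersection over k of the norm-closed convex hulls of {x_n : n ≥ k} is nonempty. -/
noncomputable section
open Filter Topology Set NormedSpace Pointwise

variable {X : Type*} [NormedAddCommGroup X] [NormedSpace ℝ X] [CompleteSpace X]

/-!
A weak cluster point of `(x n)` lies in the weak closure of every tail, hence in its norm-closed
convex hull, since closed convex sets are weakly closed.

Conversely, by Banach–Alaoglu it suffices that every point `z` of the weak-star closure of `A`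
in the bidual lies in `X`. Choose `x n ∈ A` inductively so that `x n` approximates `z` to within
`1 / (n + 1)` on finite sets of functionals in the unit ball that norm, up to a factor `2`, the
spans of `z, x 0, …, x (i - 1)` for `i ≤ n`; these exist by compactness of unit spheres in finite
dimensions. A point `ξ` in all closed convex hulls of tails of `(x n)` agrees with `z` on these
functionals. Approximating `ξ` by some `w` in one of the spans, `z - w` lies in that span and is
small on its norming functionals, so `‖z - ξ‖ ≤ 3 ε` for every `ε > 0`.
-/

section

variable {E : Type*} [NormedAddCommGroup E] [NormedSpace ℝ E]

theorem exists_finset_norming_of_injective {V : Type*} [NormedAddCommGroup V] [NormedSpace ℝ V]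
    [FiniteDimensional ℝ V] (T : V →ₗ[ℝ] StrongDual ℝ E) (hT : Function.Injective T) :
    ∃ Φ : Finset E, (∀ x ∈ Φ, ‖x‖ ≤ 1) ∧ ∀ v, ∃ x ∈ Φ, ‖T v‖ ≤ 2 * ‖T v x‖ := by
  have : ProperSpace V := FiniteDimensional.proper ℝ V
  let U : Metric.closedBall (0 : E) 1 → Set V := fun x => {v | ‖T v‖ < 2 * ‖T v x‖}
  have hU : ∀ x, IsOpen (U x) := fun x => by
    have := T.continuous_of_finiteDimensional
    exact isOpen_lt (by fun_prop) (by fun_prop)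
  have hcover : Metric.sphere (0 : V) 1 ⊆ ⋃ x, U x := by
    intro v hv
    have hTv : 0 < ‖T v‖ :=
      norm_pos_iff.2 <| (map_ne_zero_iff T hT).2 <| ne_zero_of_mem_unit_sphere ⟨v, hv⟩
    obtain ⟨x, hx, hvx⟩ := (T v).exists_lt_apply_of_lt_opNorm (half_lt_self hTv)
    refine mem_iUnion.2 ⟨⟨x, mem_closedBall_zero_iff.2 hx.le⟩, ?_⟩
    simp only [U, mem_ofPred_eq]
    linarith
  obtain ⟨t, ht⟩ := (isCompact_sphere (0 : V) 1).elim_finite_subcover U hU hcover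
  classical
  refine ⟨insert 0 (t.image Subtype.val), ?_, fun v => ?_⟩
  · simp only [Finset.mem_insert, Finset.mem_image]
    rintro x (rfl | ⟨x, -, rfl⟩)
    · simp
    · exact mem_closedBall_zero_iff.1 x.2
  rcases eq_or_ne v 0 with rfl | hv0
  · exact ⟨0, Finset.mem_insert_self _ _, by simp⟩
  have hnorm : 0 < ‖v‖ := norm_pos_iff.2 hv0
  have hunit : ‖v‖⁻¹ • v ∈ Metric.sphere (0 : V) 1 := by
    rw [mem_sphere_zero_iff_norm, norm_smul, norm_inv, norm_norm, inv_mul_cancel₀ hnorm.ne']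
  obtain ⟨x, hxt, hx⟩ := mem_iUnion₂.1 (ht hunit)
  refine ⟨x, Finset.mem_insert_of_mem (Finset.mem_image_of_mem _ hxt), ?_⟩
  simp only [U, mem_ofPred_eq, map_smul, norm_smul, FunLike.coe_smul, Pi.smul_apply, smul_eq_mul,
    norm_mul, norm_inv, norm_norm] at hx
  rw [mul_left_comm] at hx
  exact (lt_of_mul_lt_mul_left hx (inv_nonneg.2 hnorm.le)).le

theorem exists_finset_norming_span {S : Set (StrongDual ℝ E)} (hS : S.Finite) :
    ∃ Φ : Finset E, (∀ x ∈ Φ, ‖x‖ ≤ 1) ∧ ∀ v ∈ Submodule.span ℝ S, ∃ x ∈ Φ, ‖v‖ ≤ 2 * ‖v x‖ := by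
  have := FiniteDimensional.span_of_finite ℝ hS
  obtain ⟨Φ, hΦ_le, hΦ⟩ :=
    exists_finset_norming_of_injective (V := Submodule.span ℝ S) (Submodule.span ℝ S).subtype
      (Submodule.injective_subtype _)
  exact ⟨Φ, hΦ_le, fun v hv => hΦ ⟨v, hv⟩⟩

theorem WeakDual.exists_mem_forall_abs_sub_lt_of_mem_closure {T : Set (WeakDual ℝ E)}
    {z : WeakDual ℝ E} (hz : z ∈ closure T) (Φ : Finset E) {ε : ℝ} (hε : 0 < ε) :
    ∃ w ∈ T, ∀ x ∈ Φ, |z x - w x| < ε := by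
  let p : WeakDual ℝ E → Φ → ℝ := fun w x => w x
  have hp : Continuous p := continuous_pi fun x => WeakDual.eval_continuous (x : E)
  obtain ⟨-, ⟨w, hw, rfl⟩, hdist⟩ :=
    Metric.mem_closure_iff.1 (map_mem_closure hp hz (mapsTo_image p T)) ε hε
  refine ⟨w, hw, fun x hx => ?_⟩
  simpa [p, Real.dist_eq] using (dist_pi_lt_iff hε).1 hdist ⟨x, hx⟩

theorem exists_seq_of_forall_exists_prefix {α : Type*} [Nonempty α]
    (P : ℕ → (ℕ → α) → α → Prop) (hP : ∀ n u v, (∀ i < n, u i = v i) → ∀ a, P n u a → P n v a)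
    (h : ∀ n u, ∃ a, P n u a) : ∃ x : ℕ → α, ∀ n, P n x (x n) := by
  classical
  choose pick hpick using h
  let extend (n : ℕ) (g : ∀ m < n, α) : ℕ → α := fun m =>
    if hm : m < n then g m hm else Classical.arbitrary α
  let x : ℕ → α := Nat.strongRec fun n g => pick n (extend n g)
  refine ⟨x, fun n => ?_⟩
  rw [show x n = pick n (extend n fun m _ => x m) from Nat.strongRec_eq _ n]
  exact hP n _ x (fun i hi => dif_pos hi) _ (hpick n _)

theorem WeakDual.exists_seq_forall_abs_sub_lt_of_mem_closure_image {α : Type*} [DecidableEq α]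
    {A : Set α} {g : α → WeakDual ℝ E} {z : WeakDual ℝ E} (hz : z ∈ closure (g '' A))
    (N : Finset α → Finset E) :
    ∃ x : ℕ → α, (∀ n, x n ∈ A) ∧
      ∀ n, ∀ i ≤ n, ∀ f ∈ N ((Finset.range i).image x), |z f - g (x n) f| < 1 / (n + 1) := by
  classical
  have : Nonempty α := (closure_nonempty_iff.1 ⟨z, hz⟩).of_image.to_subtype.map Subtype.val
  let P (n : ℕ) (u : ℕ → α) (a : α) : Prop :=
    a ∈ A ∧ ∀ i ≤ n, ∀ f ∈ N ((Finset.range i).image u), |z f - g a f| < 1 / (n + 1)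
  obtain ⟨x, hx⟩ : ∃ x : ℕ → α, ∀ n, P n x (x n) := by
    refine exists_seq_of_forall_exists_prefix P
      (fun n u v huv a ⟨ha, hau⟩ => ⟨ha, fun i hi f hf => hau i hi f ?_⟩) (fun n u => ?_)
    · rwa [Finset.image_congr fun j hj => huv j ((Finset.mem_range.1 hj).trans_le hi)]
    · obtain ⟨-, ⟨a, ha, rfl⟩, hw⟩ := exists_mem_forall_abs_sub_lt_of_mem_closure hz
        ((Finset.range (n + 1)).biUnion fun i => N ((Finset.range i).image u))
        Nat.one_div_pos_of_nat
      exact ⟨a, ha, fun i hi f hf =>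
        hw f (Finset.mem_biUnion.2 ⟨i, Finset.mem_range.2 (Nat.lt_succ_of_le hi), hf⟩)⟩
  exact ⟨x, fun n => (hx n).1, fun n => (hx n).2⟩

theorem Submodule.exists_mem_span_image_Iio {R M : Type*} [Semiring R] [AddCommMonoid M]
    [Module R M] {x : ℕ → M} {w : M} (hw : w ∈ span R (range x)) :
    ∃ m, w ∈ span R (x '' Iio m) := by
  rw [← image_univ, ← iUnion_Iio, image_iUnion, span_iUnion] at hw
  refine (mem_iSup_of_directed _ (Monotone.directed_le fun a b hab => ?_)).1 hw
  exact span_mono (image_mono (Iio_subset_Iio hab))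

theorem ContinuousLinearMap.apply_eq_of_mem_iInter_closure_convexHull {x : ℕ → E} {ξ : E}
    (hξ : ξ ∈ ⋂ k : ℕ, closure (convexHull ℝ {y : E | ∃ n ≥ k, y = x n}))
    (f : StrongDual ℝ E) {c : ℝ} (hc : Tendsto (fun n => f (x n)) atTop (𝓝 c)) : f ξ = c := by
  refine eq_of_forall_dist_le fun ε hε => ?_
  obtain ⟨k, hk⟩ := Metric.tendsto_atTop.1 hc ε hε
  have hball : closure (convexHull ℝ {y : E | ∃ n ≥ k, y = x n}) ⊆ f ⁻¹' Metric.closedBall c ε :=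
    closure_minimal
      (convexHull_min (by rintro _ ⟨n, hn, rfl⟩; exact (hk n hn).le)
        ((convex_closedBall c ε).linear_preimage (f : E →ₗ[ℝ] ℝ)))
      (Metric.isClosed_closedBall.preimage f.continuous)
  exact hball (mem_iInter.1 hξ k)

theorem eq_inclusionInDoubleDual_of_forall_norming {x : ℕ → E} {ξ : E}
    (hξ : ξ ∈ closure (Submodule.span ℝ (range x) : Set E)) (z : StrongDual ℝ (StrongDual ℝ E))
    (Φ : ℕ → Finset (StrongDual ℝ E)) (hΦ_le : ∀ m, ∀ f ∈ Φ m, ‖f‖ ≤ 1)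
    (hΦ : ∀ m, ∀ v ∈ Submodule.span ℝ (insert z (inclusionInDoubleDual ℝ E '' (x '' Iio m))),
      ∃ f ∈ Φ m, ‖v‖ ≤ 2 * ‖v f‖)
    (hzξ : ∀ m, ∀ f ∈ Φ m, z f = f ξ) : z = inclusionInDoubleDual ℝ E ξ := by
  refine eq_of_norm_sub_le_zero (le_of_forall_pos_le_add fun ε hε => ?_)
  obtain ⟨w, hw, hξw⟩ := Metric.mem_closure_iff.1 hξ (ε / 3) (by positivity)
  obtain ⟨m, hwm⟩ := Submodule.exists_mem_span_image_Iio hw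
  have hJw : inclusionInDoubleDual ℝ E w ∈
      Submodule.span ℝ (insert z (inclusionInDoubleDual ℝ E '' (x '' Iio m))) :=
    Submodule.span_mono (subset_insert _ _)
      (Submodule.apply_mem_span_image_of_mem_span (inclusionInDoubleDual ℝ E).toLinearMap hwm)
  obtain ⟨f, hf, hnorming⟩ :=
    hΦ m _ (Submodule.sub_mem _ (Submodule.subset_span (mem_insert _ _)) hJw)
  have hf_small : ‖(z - inclusionInDoubleDual ℝ E w) f‖ ≤ ε / 3 := by
    have heval : (z - inclusionInDoubleDual ℝ E w) f = f (ξ - w) := by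
      simp [hzξ m f hf]
    calc ‖(z - inclusionInDoubleDual ℝ E w) f‖ ≤ ‖f‖ * ‖ξ - w‖ := heval ▸ f.le_opNorm _
      _ ≤ 1 * dist ξ w := by rw [dist_eq_norm]; gcongr; exact hΦ_le m f hf
      _ ≤ ε / 3 := by linarith
  calc ‖z - inclusionInDoubleDual ℝ E ξ‖
      ≤ ‖z - inclusionInDoubleDual ℝ E w‖ +
          ‖inclusionInDoubleDual ℝ E w - inclusionInDoubleDual ℝ E ξ‖ :=
        norm_sub_le_norm_sub_add_norm_sub z _ _
    _ ≤ 2 * (ε / 3) + ‖w - ξ‖ := by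
        gcongr
        · exact hnorming.trans (by linarith)
        · rw [← map_sub]; exact double_dual_bound ℝ E _
    _ ≤ 0 + ε := by rw [← dist_eq_norm, dist_comm]; linarith

theorem mem_range_inclusionInDoubleDualWeak_of_mem_closure {A : Set E}
    (hA : ∀ x : ℕ → E, (∀ n, x n ∈ A) →
      (⋂ k : ℕ, closure (convexHull ℝ {y : E | ∃ n ≥ k, y = x n})).Nonempty)
    {z : WeakDual ℝ (StrongDual ℝ E)}
    (hz : z ∈ closure (inclusionInDoubleDualWeak ℝ E '' (toWeakSpace ℝ E '' A))) :
    z ∈ range (inclusionInDoubleDualWeak ℝ E) := by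
  classical
  let J := inclusionInDoubleDual ℝ E
  let z' : StrongDual ℝ (StrongDual ℝ E) := WeakDual.toStrongDual z
  choose N hN_le hN using fun s : Finset E =>
    exists_finset_norming_span ((s.finite_toSet.image J).insert z')
  rw [image_image] at hz
  obtain ⟨x, hxA, hx⟩ := WeakDual.exists_seq_forall_abs_sub_lt_of_mem_closure_image hz N
  obtain ⟨ξ, hξ⟩ := hA x hxA
  have hzξ (m : ℕ) (f : StrongDual ℝ E) (hf : f ∈ N ((Finset.range m).image x)) : z' f = f ξ := by
    refine (ContinuousLinearMap.apply_eq_of_mem_iInter_closure_convexHull hξ f ?_).symm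
    rw [tendsto_iff_dist_tendsto_zero]
    refine squeeze_zero' (Eventually.of_forall fun n => dist_nonneg)
      ((eventually_ge_atTop m).mono fun n hn => ?_) tendsto_one_div_add_atTop_nhds_zero_nat
    rw [Real.dist_eq, abs_sub_comm]
    exact (hx n m hn f hf).le
  have hξ_span : ξ ∈ closure (Submodule.span ℝ (range x) : Set E) :=
    closure_mono (convexHull_min (by rintro _ ⟨n, -, rfl⟩; exact Submodule.subset_span ⟨n, rfl⟩)
      (Submodule.convex _)) (mem_iInter.1 hξ 0)
  have hz'ξ : z' = J ξ :=
    eq_inclusionInDoubleDual_of_forall_norming hξ_span z' (fun m => N ((Finset.range m).image x))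
      (fun m => hN_le _) (fun m v hv => hN _ v (by simpa using hv)) hzξ
  refine ⟨toWeakSpace ℝ E ξ, ?_⟩
  exact DFunLike.ext _ _ fun f => (DFunLike.congr_fun hz'ξ f).symm

theorem iInter_closure_convexHull_nonempty_of_isCompact {A : Set E}
    (hA : IsCompact (closure (toWeakSpace ℝ E '' A))) {x : ℕ → E} (hx : ∀ n, x n ∈ A) :
    (⋂ k : ℕ, closure (convexHull ℝ {y : E | ∃ n ≥ k, y = x n})).Nonempty := by
  obtain ⟨ζ, -, hζ⟩ := hA.exists_clusterPt (f := map (toWeakSpace ℝ E ∘ x) atTop)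
    (le_principal_iff.2 (mem_map.2 (Eventually.of_forall fun n =>
      subset_closure (mem_image_of_mem _ (hx n)))))
  refine ⟨(toWeakSpace ℝ E).symm ζ, mem_iInter.2 fun k => ?_⟩
  have hζk : ζ ∈ closure (toWeakSpace ℝ E '' convexHull ℝ {y : E | ∃ n ≥ k, y = x n}) :=
    mem_closure_iff_clusterPt.2 <| hζ.mono <| le_principal_iff.2 <|
      (eventually_ge_atTop k).mono fun n hn =>
        mem_image_of_mem _ (subset_convexHull ℝ _ ⟨n, hn, rfl⟩)
  rw [← Convex.toWeakSpace_closure ℝ (convex_convexHull ℝ _)] at hζk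
  obtain ⟨y, hy, rfl⟩ := hζk
  simpa using hy

end

theorem wrc_iff_chains (A : Set X) (hA : Bornology.IsBounded A) :
    IsCompact (closure ((toWeakSpace ℝ X) '' A)) ↔
      ∀ x : ℕ → X, (∀ n, x n ∈ A) →
        (⋂ k : ℕ, closure (convexHull ℝ {y : X | ∃ n ≥ k, y = x n})).Nonempty := by
  refine ⟨fun hcompact x hx => iInter_closure_convexHull_nonempty_of_isCompact hcompact hx,
    fun hchains => ?_⟩
  have hbounded : Bornology.IsBounded (toWeakSpace ℝ X ⁻¹' (toWeakSpace ℝ X '' A)) := by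
    rwa [(toWeakSpace ℝ X).injective.preimage_image]
  exact isCompact_closure_of_isBounded ℝ X _ hbounded fun z hz =>
    mem_range_inclusionInDoubleDualWeak_of_mem_closure hchains hz
end
end

section
/- Let A ⊆ X be bounded and ε ≥ 0. If for every sequence (x_n) in A the intersection over k of the norm-closed convex hulls of ({x_n : n ≥ k} + ε·B_X) is nonempty, then A has 2ε-interchangeable double limits with B_{X*}, i.e., |lim_n lim_m x*_m(x_n) − lim_m lim_n x*_m(x_n)| ≤ 2ε whenever all limits exist for sequences (x_n) in A and (x*_m) in B_{X*}. -/
noncomputable section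
open Filter Topology Set NormedSpace Pointwise

variable {X : Type*} [NormedAddCommGroup X] [NormedSpace ℝ X] [CompleteSpace X]

/-- `A` has `ε`-interchangeable double limits with `M`. -/
def DoubleLimits (A : Set X) (ε : ℝ) (M : Set (StrongDual ℝ X)) : Prop :=
  ∀ (x : ℕ → X) (f : ℕ → StrongDual ℝ X), (∀ n, x n ∈ A) → (∀ m, f m ∈ M) →
    ∀ (u v : ℕ → ℝ) (l L : ℝ),
      (∀ n, Tendsto (fun m => f m (x n)) atTop (𝓝 (u n))) →
      Tendsto u atTop (𝓝 l) →
      (∀ m, Tendsto (fun n => f m (x n)) atTop (𝓝 (v m))) →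
      Tendsto v atTop (𝓝 L) →
      |l - L| ≤ ε

/-!
Take `z` in the intersection for `(x n)`: it lies within `ε` of the convex hull of every tail
`{x n | n ≥ k}`. Points of such a hull are convex combinations of the `x n`, so for fixed `m` the
value of `x*_m` on them is close to `lim_n x*_m (x n)`, and as `m → ∞` their values converge to a
point close to `lim_n lim_m x*_m (x n)`. Hence `x*_m z` is within `ε` of `lim_n x*_m (x n)` for every
`m`, and replacing `z` by one nearby hull point costs another `ε` in the limit over `m`.
-/

open Metric

section

variable {E : Type*} [NormedAddCommGroup E] [NormedSpace ℝ E]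

theorem exists_mem_convexHull_norm_sub_lt {T : Set E} {ε δ : ℝ} (hε : 0 ≤ ε) (hδ : 0 < δ)
    {z : E} (hz : z ∈ closure (convexHull ℝ (T + ε • closedBall (0 : E) 1))) :
    ∃ c ∈ convexHull ℝ T, ‖z - c‖ < ε + δ := by
  rw [convexHull_add, smul_unitClosedBall_of_nonneg hε, (convex_closedBall 0 ε).convexHull_eq]
    at hz
  obtain ⟨_, ⟨c, hc, b, hb, rfl⟩, hzy⟩ := mem_closure_iff.mp hz δ hδ
  rw [mem_closedBall_zero_iff] at hb
  refine ⟨c, hc, ?_⟩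
  calc ‖z - c‖ = ‖(z - (c + b)) + b‖ := by rw [sub_add_eq_sub_sub, sub_add_cancel]
    _ ≤ ‖z - (c + b)‖ + ‖b‖ := norm_add_le _ _
    _ < ε + δ := by rw [← dist_eq_norm]; linarith

theorem abs_apply_sub_apply_le {φ : StrongDual ℝ E} (hφ : ‖φ‖ ≤ 1) (y y' : E) :
    |φ y - φ y'| ≤ ‖y - y'‖ := by
  simpa [← map_sub] using φ.le_of_opNorm_le hφ (y - y')

end

theorem Convex.setOf_exists_tendsto_apply_mem {ι E F 𝓕 : Type*} [AddCommGroup E] [Module ℝ E]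
    [AddCommGroup F] [Module ℝ F] [TopologicalSpace F] [ContinuousAdd F] [ContinuousSMul ℝ F]
    [FunLike 𝓕 E F] [LinearMapClass 𝓕 ℝ E F] {K : Set F} (hK : Convex ℝ K) (f : ι → 𝓕)
    (l : Filter ι) : Convex ℝ {y | ∃ a ∈ K, Tendsto (fun i => f i y) l (𝓝 a)} := by
  rintro y ⟨a, ha, hya⟩ y' ⟨a', ha', hya'⟩ s t hs ht hst
  refine ⟨s • a + t • a', hK ha ha' hs ht hst, ?_⟩
  simpa only [map_add, map_smul] using (hya.const_smul s).add (hya'.const_smul t)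

section

variable {E : Type*} [NormedAddCommGroup E] [NormedSpace ℝ E] {x : ℕ → E} {z : E} {ε : ℝ}

theorem abs_apply_sub_le_of_tendsto {φ : StrongDual ℝ E} (hφ : ‖φ‖ ≤ 1) {v : ℝ}
    (hv : Tendsto (fun n => φ (x n)) atTop (𝓝 v))
    (hz : ∀ k, ∀ δ > 0, ∃ c ∈ convexHull ℝ {y | ∃ n ≥ k, y = x n}, ‖z - c‖ < ε + δ) :
    |φ z - v| ≤ ε := by
  refine le_of_forall_pos_le_add fun δ hδ => ?_
  obtain ⟨k, hk⟩ := tendsto_atTop.mp hv (δ / 2) (half_pos hδ)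
  obtain ⟨c, hc, hzc⟩ := hz k (δ / 2) (half_pos hδ)
  have hcv : φ c ∈ closedBall v (δ / 2) :=
    convexHull_min (by rintro _ ⟨n, hn, rfl⟩; exact (hk n hn).le)
      ((convex_closedBall v (δ / 2)).linear_preimage (φ : E →ₗ[ℝ] ℝ)) hc
  calc |φ z - v| ≤ |φ z - φ c| + |φ c - v| := abs_sub_le _ _ _
    _ ≤ ‖z - c‖ + δ / 2 := add_le_add (abs_apply_sub_apply_le hφ z c) hcv
    _ ≤ ε + δ := by linarith

theorem exists_tendsto_apply_near_of_tendsto {f : ℕ → StrongDual ℝ E} {u : ℕ → ℝ} {l δ : ℝ}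
    (hu : ∀ n, Tendsto (fun m => f m (x n)) atTop (𝓝 (u n))) (hul : Tendsto u atTop (𝓝 l))
    (hz : ∀ k, ∀ δ > 0, ∃ c ∈ convexHull ℝ {y | ∃ n ≥ k, y = x n}, ‖z - c‖ < ε + δ)
    (hδ : 0 < δ) :
    ∃ c a, ‖z - c‖ < ε + δ ∧ a ∈ closedBall l δ ∧ Tendsto (fun m => f m c) atTop (𝓝 a) := by
  obtain ⟨k, hk⟩ := tendsto_atTop.mp hul δ hδ
  obtain ⟨c, hc, hzc⟩ := hz k δ hδ
  obtain ⟨a, ha, hca⟩ := convexHull_min (by rintro _ ⟨n, hn, rfl⟩; exact ⟨u n, (hk n hn).le, hu n⟩)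
    ((convex_closedBall l δ).setOf_exists_tendsto_apply_mem f atTop) hc
  exact ⟨c, a, hzc, ha, hca⟩

end

theorem chains_imp_double_limits_general (A : Set X)
    (ε : ℝ) (hε : 0 ≤ ε)
    (h : ∀ x : ℕ → X, (∀ n, x n ∈ A) →
      (⋂ k : ℕ, closure (convexHull ℝ
        ({y : X | ∃ n ≥ k, y = x n} + ε • Metric.closedBall (0 : X) 1))).Nonempty) :
    DoubleLimits A (2 * ε) {f : StrongDual ℝ X | ‖f‖ ≤ 1} := by
  intro x f hx hf u v l L hu hul hv hvL
  obtain ⟨z, hz⟩ := h x hx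
  have hnear : ∀ k, ∀ δ > 0, ∃ c ∈ convexHull ℝ {y | ∃ n ≥ k, y = x n}, ‖z - c‖ < ε + δ :=
    fun k δ hδ => exists_mem_convexHull_norm_sub_lt hε hδ (mem_iInter.mp hz k)
  have hzv : ∀ m, |f m z - v m| ≤ ε := fun m => abs_apply_sub_le_of_tendsto (hf m) (hv m) hnear
  refine le_of_forall_pos_le_add fun δ hδ => ?_
  obtain ⟨c, a, hzc, hal, hca⟩ := exists_tendsto_apply_near_of_tendsto hu hul hnear (half_pos hδ)
  have haL : |a - L| ≤ 2 * ε + δ / 2 := by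
    refine le_of_tendsto (hca.sub hvL).abs (Eventually.of_forall fun m => ?_)
    calc |f m c - v m| ≤ |f m c - f m z| + |f m z - v m| := abs_sub_le _ _ _
      _ ≤ ‖c - z‖ + ε := add_le_add (abs_apply_sub_apply_le (hf m) c z) (hzv m)
      _ ≤ 2 * ε + δ / 2 := by rw [norm_sub_rev]; linarith
  calc |l - L| ≤ |l - a| + |a - L| := abs_sub_le _ _ _
    _ ≤ 2 * ε + δ := by rw [abs_sub_comm, ← Real.dist_eq]; linarith [mem_closedBall.mp hal]

theorem chains_imp_double_limits (A : Set X) (hA : Bornology.IsBounded A)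
    (ε : ℝ) (hε : 0 ≤ ε)
    (h : ∀ x : ℕ → X, (∀ n, x n ∈ A) →
      (⋂ k : ℕ, closure (convexHull ℝ
        ({y : X | ∃ n ≥ k, y = x n} + ε • Metric.closedBall (0 : X) 1))).Nonempty) :
    DoubleLimits A (2 * ε) {f : StrongDual ℝ X | ‖f‖ ≤ 1} :=
  chains_imp_double_limits_general A ε hε h
end
end

section
/- Let A ⊆ X be bounded and ε ≥ 0. If A is ε-weakly relatively compact, then for every sequence (x_n) in A and every r > ε, the intersection over k of the norm-closed convex hulls of ({x_n : n ≥ k} + r·B_X) is nonempty. -/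
noncomputable section
open Filter Topology Set NormedSpace Pointwise

variable {X : Type*} [NormedAddCommGroup X] [NormedSpace ℝ X] [CompleteSpace X]

/-- The weak*-closure of a set of functionals (pointwise convergence on the predual). -/
def weakStarClosure {Y : Type*} [NormedAddCommGroup Y] [NormedSpace ℝ Y]
    (S : Set (StrongDual ℝ Y)) : Set (StrongDual ℝ Y) :=
  {φ | ∀ ε > (0 : ℝ), ∀ F : Finset Y, ∃ ψ ∈ S, ∀ y ∈ F, |φ y - ψ y| < ε}

/-- `A` is `δ`-weakly relatively compact: every element of the weak*-closure of
`A` in the bidual is within distance `δ` of `X`. -/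
def EpsWRC (A : Set X) (δ : ℝ) : Prop :=
  ∀ φ ∈ weakStarClosure ((inclusionInDoubleDual ℝ X) '' A),
    Metric.infDist φ (Set.range (inclusionInDoubleDual ℝ X)) ≤ δ

/-!
A weak*-cluster point `φ ∈ X**` of the bounded sequence `(x n)` lies in the weak*-closure of
every tail `{x n : n ≥ k}`, and by `ε`-weak relative compactness there is `w ∈ X` with
`‖w - φ‖ < r`. If `w` were outside the closed convex hull of `{x n : n ≥ k} + r B_X`, a
separating functional `f` would satisfy `f (x n) + r ‖f‖ ≤ u < f w` for `n ≥ k`; but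
`f w ≤ φ f + ‖w - φ‖ ‖f‖` and `φ f` is approximated by values `f (x n)` with `n ≥ k`.
-/

section Bidual

variable {E : Type*} [NormedAddCommGroup E] [NormedSpace ℝ E]

theorem WeakDual.exists_mapClusterPt_of_norm_le {𝕜 V ι : Type*} [NontriviallyNormedField 𝕜]
    [ProperSpace 𝕜] [NormedAddCommGroup V] [NormedSpace 𝕜 V] {l : Filter ι} [l.NeBot]
    {u : ι → WeakDual 𝕜 V} {M : ℝ} (hu : ∀ i, ‖toStrongDual (u i)‖ ≤ M) :
    ∃ φ : WeakDual 𝕜 V, MapClusterPt φ l u := by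
  have hul : map u l ≤ 𝓟 (toStrongDual ⁻¹' Metric.closedBall 0 M) :=
    le_principal_iff.2 <| mem_map.2 <| Eventually.of_forall fun i => by simpa using hu i
  obtain ⟨φ, -, hφ⟩ := (WeakDual.isCompact_closedBall 0 M).exists_clusterPt hul
  exact ⟨φ, hφ⟩

theorem MapClusterPt.toStrongDual_mem_weakStarClosure {ι : Type*} {l : Filter ι}
    {u : ι → WeakDual ℝ E} {φ : WeakDual ℝ E} (hφ : MapClusterPt φ l u)
    {S : Set (StrongDual ℝ E)} {s : Set ι} (hs : s ∈ l)
    (huS : ∀ i ∈ s, WeakDual.toStrongDual (u i) ∈ S) :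
    WeakDual.toStrongDual φ ∈ weakStarClosure S := by
  intro δ hδ F
  have hU : {ψ : WeakDual ℝ E | ∀ y ∈ F, |φ y - ψ y| < δ} ∈ 𝓝 φ := by
    simp only [ofPred_forall]
    refine (Finset.iInter_mem_sets F).2 fun y _ => ?_
    refine mem_of_superset ((WeakDual.eval_continuous y).continuousAt.preimage_mem_nhds
      (Metric.ball_mem_nhds (φ y) hδ)) fun ψ hψ => ?_
    simpa [abs_sub_comm, Real.dist_eq] using hψ
  obtain ⟨i, hiU, his⟩ := (hφ.frequently hU).and_eventually hs |>.exists
  exact ⟨_, huS i his, hiU⟩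

theorem ContinuousLinearMap.apply_add_mul_norm_le {f : StrongDual ℝ E} {s : E} {r u : ℝ}
    (hr : 0 ≤ r) (h : ∀ b : E, ‖b‖ ≤ 1 → f (s + r • b) ≤ u) : f s + r * ‖f‖ ≤ u := by
  have hsu : 0 ≤ u - f s := by simpa using h 0 (by simp)
  have : ‖r • f‖ ≤ u - f s := by
    refine ContinuousLinearMap.opNorm_le_of_unit_norm hsu fun b hb => ?_
    have h₁ := h b hb.le
    have h₂ := h (-b) (by simpa using hb.le)
    simp only [map_add, map_smul, map_neg, smul_eq_mul] at h₁ h₂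
    rw [smul_apply, smul_eq_mul, Real.norm_eq_abs, abs_le]
    constructor <;> linarith
  rw [norm_smul, Real.norm_of_nonneg hr] at this
  linarith

theorem mem_closure_convexHull_add_smul_closedBall {S : Set E}
    {φ : StrongDual ℝ (StrongDual ℝ E)}
    (hφ : φ ∈ weakStarClosure (inclusionInDoubleDual ℝ E '' S))
    {w : E} {r : ℝ} (hw : dist φ (inclusionInDoubleDual ℝ E w) < r) :
    w ∈ closure (convexHull ℝ (S + r • Metric.closedBall (0 : E) 1)) := by
  by_contra hwS
  obtain ⟨f, u, hfu, hufw⟩ := geometric_hahn_banach_closed_point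
    (convex_convexHull ℝ _).closure isClosed_closure hwS
  have hr : 0 ≤ r := dist_nonneg.trans hw.le
  have hS : ∀ s ∈ S, f s + r * ‖f‖ ≤ u := fun s hs =>
    ContinuousLinearMap.apply_add_mul_norm_le hr fun b hb =>
      (hfu _ <| subset_closure <| subset_convexHull ℝ _ <|
        add_mem_add hs <| smul_mem_smul_set <| by simpa using hb).le
  obtain ⟨_, ⟨s, hs, rfl⟩, hφs⟩ := hφ (f w - u) (by linarith) {f}
  have hφf : φ f < f s + (f w - u) := by
    have := (abs_lt.1 (hφs f (Finset.mem_singleton_self f))).2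
    rw [dual_def] at this
    linarith
  have hwφ : f w - φ f ≤ r * ‖f‖ := calc
    f w - φ f = (inclusionInDoubleDual ℝ E w - φ) f := by simp [dual_def]
    _ ≤ ‖(inclusionInDoubleDual ℝ E w - φ) f‖ := Real.le_norm_self _
    _ ≤ ‖inclusionInDoubleDual ℝ E w - φ‖ * ‖f‖ := ContinuousLinearMap.le_opNorm _ f
    _ ≤ r * ‖f‖ := by
      gcongr
      exact (dist_eq_norm' φ _).symm.trans_le hw.le
  linarith [hS s hs]

end Bidual

theorem epsWRC_imp_chains_general (A : Set X) (hA : Bornology.IsBounded A)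
    (ε : ℝ) (h : EpsWRC A ε) :
    ∀ x : ℕ → X, (∀ n, x n ∈ A) → ∀ r > ε,
      (⋂ k : ℕ, closure (convexHull ℝ
        ({y : X | ∃ n ≥ k, y = x n} + r • Metric.closedBall (0 : X) 1))).Nonempty := by
  intro x hx r hr
  set J := inclusionInDoubleDual ℝ X
  obtain ⟨M, hM⟩ := hA.exists_norm_le
  obtain ⟨φ, hφ⟩ := WeakDual.exists_mapClusterPt_of_norm_le (l := atTop)
    (u := fun n => StrongDual.toWeakDual (J (x n))) fun n =>
      (double_dual_bound ℝ X (x n)).trans (hM _ (hx n))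
  have hφA : WeakDual.toStrongDual φ ∈ weakStarClosure (J '' A) :=
    hφ.toStrongDual_mem_weakStarClosure univ_mem fun n _ => mem_image_of_mem J (hx n)
  obtain ⟨_, ⟨w, rfl⟩, hw⟩ :=
    (Metric.infDist_lt_iff (range_nonempty J)).1 ((h _ hφA).trans_lt hr)
  refine ⟨w, mem_iInter.2 fun k => mem_closure_convexHull_add_smul_closedBall ?_ hw⟩
  exact hφ.toStrongDual_mem_weakStarClosure (Ici_mem_atTop k) fun n hn =>
    ⟨x n, ⟨n, hn, rfl⟩, rfl⟩

theorem epsWRC_imp_chains (A : Set X) (hA : Bornology.IsBounded A)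
    (ε : ℝ) (hε : 0 ≤ ε) (h : EpsWRC A ε) :
    ∀ x : ℕ → X, (∀ n, x n ∈ A) → ∀ r > ε,
      (⋂ k : ℕ, closure (convexHull ℝ
        ({y : X | ∃ n ≥ k, y = x n} + r • Metric.closedBall (0 : X) 1))).Nonempty :=
  epsWRC_imp_chains_general A hA ε h
end
end

section
/- Let A ⊆ X be bounded and ε ≥ 0. If for every sequence (x_n) in A the intersection over k of the sets (closed convex hull of {x_n : n ≥ k}) + ε·B_X is nonempty, then A is 2ε-weakly relatively compact. -/
/-!
Suppose some `φ` in the weak*-closure of `A` lies at distance `D > 2ε` from `X`. By Hahn–Banach,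
for any finitely many points `φ` nearly attains `D` on a norm-one functional vanishing at them.
Alternating this with weak*-approximation of `φ` by points of `A` produces `x n ∈ A` and
norm-one `f n` with `f n (x m) = 0` for `m < n` and `f m (x n) ≈ D` for `m ≤ n`. A point `z` of
`⋂ k, conv {x n | n ≥ k} + ε B` then has `f m z ≳ D - ε` for all `m`, whereas `f N z ≲ ε` for
large `N`, since `z` is `ε`-close to a point near a finite convex combination of the `x n`.
Hence `D ≤ 2ε`.
-/

noncomputable section
open Filter Topology Set NormedSpace Pointwise

variable {X : Type*} [NormedAddCommGroup X] [NormedSpace ℝ X] [CompleteSpace X]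

theorem convexHull_range_eq_iUnion_convexHull_image_Iio {𝕜 E : Type*} [Semiring 𝕜]
    [PartialOrder 𝕜] [AddCommMonoid E] [Module 𝕜 E] (x : ℕ → E) :
    convexHull 𝕜 (range x) = ⋃ N : ℕ, convexHull 𝕜 (x '' Iio N) := by
  refine (convexHull_min ?_ ?_).antisymm
    (iUnion_subset fun N ↦ convexHull_mono (image_subset_range _ _))
  · rintro _ ⟨n, rfl⟩
    exact mem_iUnion.2 ⟨n + 1, subset_convexHull 𝕜 _ ⟨n, Nat.lt_succ_self n, rfl⟩⟩
  · refine Directed.convex_iUnion ?_ fun _ ↦ convex_convexHull 𝕜 _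
    exact Monotone.directed_le fun _ _ h ↦ convexHull_mono (image_mono (Iio_subset_Iio h))

section

open Metric

variable {E : Type*} [NormedAddCommGroup E] [NormedSpace ℝ E]

theorem mem_range_inclusionInDoubleDual_of_forall_eq_zero (s : Finset E)
    (Φ : StrongDual ℝ (StrongDual ℝ E))
    (h : ∀ f : StrongDual ℝ E, (∀ x ∈ s, f x = 0) → Φ f = 0) :
    Φ ∈ range (inclusionInDoubleDual ℝ E) := by
  have hker : ⨅ x : s, LinearMap.ker (inclusionInDoubleDual ℝ E x).toLinearMap ≤
      LinearMap.ker Φ.toLinearMap := fun f hf ↦ by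
    simp only [Submodule.mem_iInf, LinearMap.mem_ker] at hf
    exact h f fun x hx ↦ hf ⟨x, hx⟩
  obtain ⟨c, hc⟩ :=
    (Submodule.mem_span_range_iff_exists_fun ℝ).1 (mem_span_of_iInf_ker_le_ker hker)
  refine ⟨∑ x : s, c x • (x : E), ContinuousLinearMap.ext fun f ↦ ?_⟩
  simpa [dual_def] using LinearMap.congr_fun hc f

theorem infDist_range_inclusionInDoubleDual_le (s : Finset E)
    {Φ : StrongDual ℝ (StrongDual ℝ E)} {r : ℝ}
    (hΦ : ∀ f : StrongDual ℝ E, ‖f‖ ≤ 1 → (∀ x ∈ s, f x = 0) → Φ f ≤ r) :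
    infDist Φ (range (inclusionInDoubleDual ℝ E)) ≤ r := by
  have hr : 0 ≤ r := by simpa using hΦ 0 (by simp) (by simp)
  set K : Submodule ℝ (StrongDual ℝ E) :=
    ⨅ x ∈ s, LinearMap.ker (inclusionInDoubleDual ℝ E x).toLinearMap
  have hK (f : StrongDual ℝ E) : f ∈ K ↔ ∀ x ∈ s, f x = 0 := by simp [K, dual_def]
  have hΦK (f : K) : Φ f ≤ r * ‖(f : StrongDual ℝ E)‖ := by
    obtain ⟨f, hf⟩ := f
    rcases eq_or_ne f 0 with rfl | hf0
    · simp
    have hnorm : 0 < ‖f‖ := norm_pos_iff.2 hf0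
    have := hΦ (‖f‖⁻¹ • f) (norm_smul_inv_norm hf0).le fun x hx ↦ by simp [(hK f).1 hf x hx]
    rw [map_smul, smul_eq_mul, inv_mul_le_iff₀ hnorm] at this
    linarith
  -- Hahn–Banach: `Φ` restricted to the annihilator `K` of `s` extends to `g'` with `‖g'‖ ≤ r`,
  -- and `Φ - g'` vanishes on `K`, so it is the evaluation at a point of `E`.
  obtain ⟨g, hgΦ, hg⟩ := Module.Dual.exists_extension_of_le_seminorm_real K
    (Φ.toLinearMap ∘ₗ K.subtype) (p := r.toNNReal • normSeminorm ℝ (StrongDual ℝ E))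
    fun f ↦ by simpa [NNReal.smul_def, hr] using hΦK f
  let g' : StrongDual ℝ (StrongDual ℝ E) :=
    g.mkContinuous r fun f ↦ by simpa [NNReal.smul_def, hr] using hg f
  obtain ⟨y, hy⟩ := mem_range_inclusionInDoubleDual_of_forall_eq_zero s (Φ - g') fun f hf ↦ by
    simpa [g', sub_eq_zero] using (hgΦ ⟨f, (hK f).2 hf⟩).symm
  calc infDist Φ (range (inclusionInDoubleDual ℝ E))
    _ ≤ dist Φ (inclusionInDoubleDual ℝ E y) := infDist_le_dist_of_mem (mem_range_self y)
    _ = ‖g'‖ := by rw [hy]; exact dist_self_sub_right (E := StrongDual ℝ (StrongDual ℝ E)) _ _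
    _ ≤ r := LinearMap.mkContinuous_norm_le _ hr _

theorem exists_seq_of_mem_weakStarClosure {A : Set E} {Φ : StrongDual ℝ (StrongDual ℝ E)}
    (hΦ : Φ ∈ weakStarClosure (inclusionInDoubleDual ℝ E '' A)) {r δ : ℝ}
    (hr : r < infDist Φ (range (inclusionInDoubleDual ℝ E))) (hδ : 0 < δ) :
    ∃ (x : ℕ → E) (f : ℕ → StrongDual ℝ E), (∀ n, x n ∈ A) ∧ (∀ n, ‖f n‖ ≤ 1) ∧
      (∀ n, r < Φ (f n)) ∧ (∀ m n, m < n → f n (x m) = 0) ∧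
      (∀ m n, m ≤ n → |Φ (f m) - f m (x n)| < δ) := by
  have step (s : Finset (E × StrongDual ℝ E)) : ∃ p : E × StrongDual ℝ E,
      (p.1 ∈ A ∧ ‖p.2‖ ≤ 1 ∧ r < Φ p.2 ∧ |Φ p.2 - p.2 p.1| < δ) ∧
      ∀ q ∈ s, p.2 q.1 = 0 ∧ |Φ q.2 - q.2 p.1| < δ := by
    classical
    obtain ⟨f, hf1, hfs, hrf⟩ : ∃ f : StrongDual ℝ E,
        ‖f‖ ≤ 1 ∧ (∀ x ∈ s.image Prod.fst, f x = 0) ∧ r < Φ f := by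
      by_contra! h
      exact hr.not_ge (infDist_range_inclusionInDoubleDual_le _ h)
    obtain ⟨_, ⟨a, ha, rfl⟩, hψ⟩ := hΦ δ hδ (insert f (s.image Prod.snd))
    refine ⟨(a, f), ⟨ha, hf1, hrf, hψ f (Finset.mem_insert_self _ _)⟩, fun q hq ↦
      ⟨hfs _ (Finset.mem_image_of_mem _ hq),
        hψ _ (Finset.mem_insert_of_mem (Finset.mem_image_of_mem _ hq))⟩⟩
  obtain ⟨p, hp, hpp⟩ := exists_seq_of_forall_finset_exists _ _ fun s _ ↦ step s
  refine ⟨fun n ↦ (p n).1, fun n ↦ (p n).2, fun n ↦ (hp n).1, fun n ↦ (hp n).2.1,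
    fun n ↦ (hp n).2.2.1, fun m n hmn ↦ (hpp m n hmn).1, fun m n hmn ↦ ?_⟩
  rcases hmn.lt_or_eq with hmn | rfl
  · exact (hpp m n hmn).2
  · exact (hp m).2.2.2

theorem abs_apply_le_of_mem_closedBall {f : StrongDual ℝ E} (hf : ‖f‖ ≤ 1) {w : E} {ε : ℝ}
    (hw : w ∈ closedBall (0 : E) ε) : |f w| ≤ ε := by
  rw [mem_closedBall_zero_iff] at hw
  exact (f.le_of_opNorm_le hf w).trans (by linarith)

theorem sub_le_apply_of_mem_closure_convexHull_add {S : Set E} {f : StrongDual ℝ E}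
    (hf : ‖f‖ ≤ 1) {a ε : ℝ} (hε : 0 ≤ ε) (hS : ∀ y ∈ S, a ≤ f y) {z : E}
    (hz : z ∈ closure (convexHull ℝ S) + ε • closedBall (0 : E) 1) : a - ε ≤ f z := by
  rw [smul_unitClosedBall_of_nonneg hε] at hz
  obtain ⟨c, hc, w, hw, rfl⟩ := hz
  have hac : a ≤ f c := closure_minimal
    (convexHull_min hS (convex_halfSpace_ge f.toLinearMap.isLinear a))
    (isClosed_le continuous_const f.continuous) hc
  have hfw := abs_apply_le_of_mem_closedBall hf hw
  rw [map_add]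
  linarith [neg_abs_le (f w)]

theorem exists_forall_apply_le_of_mem_closure_convexHull_add {x : ℕ → E} {S : Set E}
    (hS : S ⊆ range x) {δ ε : ℝ} (hδ : 0 < δ) (hε : 0 ≤ ε) {z : E}
    (hz : z ∈ closure (convexHull ℝ S) + ε • closedBall (0 : E) 1) :
    ∃ N, ∀ f : StrongDual ℝ E, ‖f‖ ≤ 1 → (∀ n < N, f (x n) = 0) → f z ≤ δ + ε := by
  rw [smul_unitClosedBall_of_nonneg hε] at hz
  obtain ⟨c, hc, w, hw, rfl⟩ := hz
  obtain ⟨c', hc', hcc'⟩ := mem_closure_iff.1 hc δ hδ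
  obtain ⟨N, hN⟩ := mem_iUnion.1 <|
    convexHull_range_eq_iUnion_convexHull_image_Iio (𝕜 := ℝ) x ▸ convexHull_mono hS hc'
  refine ⟨N, fun f hf hfx ↦ ?_⟩
  have hfc' : f c' = 0 := by
    refine convexHull_min ?_ (LinearMap.ker f.toLinearMap).convex hN
    rintro _ ⟨n, hn, rfl⟩
    exact hfx n hn
  have hfcc' := abs_apply_le_of_mem_closedBall hf (w := c - c')
    (mem_closedBall_zero_iff.2 (by simpa [dist_eq_norm] using hcc'.le))
  have hfw := abs_apply_le_of_mem_closedBall hf hw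
  rw [map_sub, hfc', sub_zero] at hfcc'
  rw [map_add]
  linarith [le_abs_self (f c), le_abs_self (f w)]

end

theorem hull_plus_ball_imp_epsWRC_general (A : Set X)
    (ε : ℝ) (hε : 0 ≤ ε)
    (h : ∀ x : ℕ → X, (∀ n, x n ∈ A) →
      (⋂ k : ℕ, (closure (convexHull ℝ {y : X | ∃ n ≥ k, y = x n})
        + ε • Metric.closedBall (0 : X) 1)).Nonempty) :
    EpsWRC A (2 * ε) := by
  intro φ hφ
  by_contra! hφA
  set D := Metric.infDist φ (range (inclusionInDoubleDual ℝ X))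
  obtain ⟨δ, hδ, hδD⟩ : ∃ δ : ℝ, 0 < δ ∧ 4 * δ + 2 * ε ≤ D :=
    ⟨(D - 2 * ε) / 4, by linarith, by linarith⟩
  obtain ⟨x, f, hxA, hf1, hφf, hfx, hφfx⟩ :=
    exists_seq_of_mem_weakStarClosure hφ (r := D - δ) (by linarith) hδ
  obtain ⟨z, hz⟩ := h x hxA
  rw [mem_iInter] at hz
  have hlow (i : ℕ) : D - δ - δ - ε ≤ f i z := by
    refine sub_le_apply_of_mem_closure_convexHull_add (hf1 i) hε ?_ (hz i)
    rintro _ ⟨n, hn, rfl⟩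
    linarith [(abs_lt.1 (hφfx i n hn)).2, hφf i]
  obtain ⟨N, hN⟩ := exists_forall_apply_le_of_mem_closure_convexHull_add
    (by rintro _ ⟨n, -, rfl⟩; exact mem_range_self n) hδ hε (hz 0)
  linarith [hlow N, hN (f N) (hf1 N) fun n hn ↦ hfx n N hn]

theorem hull_plus_ball_imp_epsWRC (A : Set X) (hA : Bornology.IsBounded A)
    (ε : ℝ) (hε : 0 ≤ ε)
    (h : ∀ x : ℕ → X, (∀ n, x n ∈ A) →
      (⋂ k : ℕ, (closure (convexHull ℝ {y : X | ∃ n ≥ k, y = x n})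
        + ε • Metric.closedBall (0 : X) 1)).Nonempty) :
    EpsWRC A (2 * ε) :=
  hull_plus_ball_imp_epsWRC_general A ε hε h
end
end

section
/- Let T, S ⊆ X* be such that for every countable set D ⊆ X and every x* ∈ T there is y* ∈ S agreeing with x* on D. Then for every countable set D ⊆ X, the σ_S-closed convex hull of D is contained in the σ_T-closed convex hull of D. -/
noncomputable section
open Filter Topology Set NormedSpace Pointwise

variable {X : Type*} [NormedAddCommGroup X] [NormedSpace ℝ X] [CompleteSpace X]

/-! Apply the hypothesis to the countable set `D ∪ {x}`: each functional of `T` is replaced by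
one of `S` that agrees with it at `x` and, by linearity, on the convex hull of `D`. Then every
`σ_S`-approximation of `x` from the hull is also a `σ_T`-approximation. -/

theorem LinearMap.eqOn_convexHull {𝕜 E F : Type*} [Field 𝕜] [LinearOrder 𝕜]
    [IsStrictOrderedRing 𝕜] [AddCommGroup E] [Module 𝕜 E] [AddCommGroup F] [Module 𝕜 F]
    {f g : E →ₗ[𝕜] F} {s : Set E} (h : EqOn f g s) : EqOn f g (convexHull 𝕜 s) :=
  fun _ hx ↦ LinearMap.eqOn_span' h <|
    convexHull_min Submodule.subset_span (Submodule.span 𝕜 s).convex hx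

theorem mem_sigmaClosure_of_forall_exists_eqOn {X : Type*} [NormedAddCommGroup X]
    [NormedSpace ℝ X] {S T : Set (StrongDual ℝ X)} {A : Set X} {x : X}
    (hx : x ∈ sigmaClosure S A) (hT : ∀ f ∈ T, ∃ g ∈ S, f x = g x ∧ EqOn f g A) :
    x ∈ sigmaClosure T A := by
  classical
  intro ε hε F hFT
  choose! g hgS hgx hgA using hT
  have hGS : (F.image g : Set (StrongDual ℝ X)) ⊆ S := by
    rw [Finset.coe_image]
    exact image_subset_iff.2 fun f hf ↦ hgS f (hFT hf)
  obtain ⟨y, hyA, hy⟩ := hx ε hε (F.image g) hGS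
  refine ⟨y, hyA, fun f hf ↦ ?_⟩
  rw [hgx f (hFT hf), hgA f (hFT hf) hyA]
  exact hy (g f) (Finset.mem_image_of_mem g hf)

theorem unifying_lemma (T S : Set (StrongDual ℝ X))
    (h : ∀ D : Set X, D.Countable → ∀ f ∈ T, ∃ g ∈ S, ∀ x ∈ D, f x = g x) :
    ∀ D : Set X, D.Countable →
      sigmaClosure S (convexHull ℝ D) ⊆ sigmaClosure T (convexHull ℝ D) := by
  intro D hD x hx
  refine mem_sigmaClosure_of_forall_exists_eqOn hx fun f hf ↦ ?_
  obtain ⟨g, hgS, hfg⟩ := h (insert x D) (hD.insert x) f hf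
  refine ⟨g, hgS, hfg x (mem_insert x D), ?_⟩
  exact LinearMap.eqOn_convexHull (f := f.toLinearMap) (g := g.toLinearMap)
    fun z hz ↦ hfg z (mem_insert_of_mem x hz)
end
end

section
/- Let A ⊆ X and S ⊆ X* be bounded and ε ≥ 0 with A having ε-interchangeable double limits with S. Then A has ε-interchangeable double limits with the closure of S in the topology γ of uniform convergence on bounded countable subsets of X. -/
noncomputable section
open Filter Topology Set NormedSpace Pointwise

variable {X : Type*} [NormedAddCommGroup X] [NormedSpace ℝ X] [CompleteSpace X]

/-- The closure of `S` in the topology `γ` of uniform convergence on bounded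
countable subsets of `X`. -/
def gammaClosure (S : Set (StrongDual ℝ X)) : Set (StrongDual ℝ X) :=
  {f | ∀ ε > (0 : ℝ), ∀ D : Set X, D.Countable → Bornology.IsBounded D →
    ∃ g ∈ S, ∀ x ∈ D, |f x - g x| ≤ ε}

/-!
Given `x n ∈ A` and `f m ∈ gammaClosure S`, the set `{x n}` is bounded and countable, so each
`f m` can be replaced by some `g m ∈ S` with `|f m - g m| ≤ 1/(m+1)` on all of `{x n}`. This
uniform error does not change the limits in `m`, and changes the limits in `n` by at most
`1/(m+1)`, which vanishes in the outer limit. The inner limits in `n` for `g m` need not exist,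
but each `n ↦ g m (x n)` is bounded, so by compactness of a countable product of compact sets
a single subsequence of `x` makes all of them converge.
-/

theorem Filter.Tendsto.congr_abs_sub_le {ι : Type*} {p : Filter ι} {f g δ : ι → ℝ} {a : ℝ}
    (hf : Tendsto f p (𝓝 a)) (hδ : Tendsto δ p (𝓝 0)) (h : ∀ i, |f i - g i| ≤ δ i) :
    Tendsto g p (𝓝 a) :=
  hf.congr_dist
    (squeeze_zero (fun _ => dist_nonneg) (fun i => (Real.dist_eq _ _).trans_le (h i)) hδ)

theorem exists_strictMono_forall_tendsto_of_isBounded {ι β : Type*} [Countable ι]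
    [PseudoMetricSpace β] [ProperSpace β] (s : ι → ℕ → β)
    (hs : ∀ i, Bornology.IsBounded (range (s i))) :
    ∃ φ : ℕ → ℕ, StrictMono φ ∧ ∃ a : ι → β, ∀ i, Tendsto (fun k => s i (φ k)) atTop (𝓝 (a i)) := by
  have hK : IsCompact (univ.pi fun i => closure (range (s i))) :=
    isCompact_univ_pi fun i => (hs i).isCompact_closure
  obtain ⟨a, -, φ, hφ, ha⟩ :=
    hK.tendsto_subseq (x := fun n i => s i n) fun n i _ => subset_closure (mem_range_self n)
  exact ⟨φ, hφ, a, tendsto_pi_nhds.1 ha⟩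

theorem double_limits_gamma_closure_general (A : Set X) (hA : Bornology.IsBounded A)
    (S : Set (StrongDual ℝ X)) (ε : ℝ) (h : DoubleLimits A ε S) :
    DoubleLimits A ε (gammaClosure S) := by
  intro x f hx hf u v l L hu hl hv hL
  have hxA : Bornology.IsBounded (range x) := hA.subset (range_subset_iff.2 hx)
  obtain ⟨g, hgS, hfg⟩ : ∃ g : ℕ → StrongDual ℝ X, (∀ m, g m ∈ S) ∧
      ∀ m n, |f m (x n) - g m (x n)| ≤ 1 / ((m : ℝ) + 1) := by
    choose g hgS hg using fun m : ℕ =>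
      hf m (1 / ((m : ℝ) + 1)) (by positivity) (range x) (countable_range x) hxA
    exact ⟨g, hgS, fun m n => hg m (x n) (mem_range_self n)⟩
  obtain ⟨φ, hφ, a, ha⟩ := exists_strictMono_forall_tendsto_of_isBounded
    (fun m n => g m (x n)) fun m =>
      ((g m).lipschitz.isBounded_image hxA).subset (range_comp (g m) x).subset
  have hδ := tendsto_one_div_add_atTop_nhds_zero_nat (𝕜 := ℝ)
  have hva : ∀ m, |v m - a m| ≤ 1 / ((m : ℝ) + 1) := fun m =>
    le_of_tendsto (((hv m).comp hφ.tendsto_atTop).sub (ha m)).abs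
      (Eventually.of_forall fun k => hfg m (φ k))
  exact h (x ∘ φ) g (fun k => hx (φ k)) hgS (u ∘ φ) a l L
    (fun k => (hu (φ k)).congr_abs_sub_le hδ fun m => hfg m (φ k))
    (hl.comp hφ.tendsto_atTop) ha (hL.congr_abs_sub_le hδ hva)

theorem double_limits_gamma_closure (A : Set X) (hA : Bornology.IsBounded A)
    (S : Set (StrongDual ℝ X)) (hS : ∃ C : ℝ, ∀ f ∈ S, ‖f‖ ≤ C)
    (ε : ℝ) (hε : 0 ≤ ε) (h : DoubleLimits A ε S) :
    DoubleLimits A ε (gammaClosure S) :=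
  double_limits_gamma_closure_general A hA S ε h
end
end

section
/- Let (x_n) be a bounded sequence in X and B ⊆ B_{X*} such that the γ-closed convex hull of B equals B_{X*}, where γ is the topology of uniform convergence on bounded countable subsets of X. Then the σ_B-closed convex hull of {x_n : n ∈ ℕ} equals its norm-closed convex hull. -/
noncomputable section
open Filter Topology Set NormedSpace Pointwise

variable {X : Type*} [NormedAddCommGroup X] [NormedSpace ℝ X] [CompleteSpace X]

/-! If `x₀` lies in the `σ_B`-closure but not in the norm closure of `conv {xₙ}`, Hahn–Banach
gives `‖f‖ ≤ 1` with `f x₀ > u ≥ f xₙ` for all `n`. By hypothesis `f` is a `γ`-limit of convex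
combinations `g` of `B`; as `{x₀} ∪ {xₙ}` is countable and bounded, `g` can be taken uniformly
close to `f` at `x₀` and at every `xₙ`, hence `g ≤ u + ε` on `conv {xₙ}`. But `g` involves only
finitely many elements of `B`, so `g x₀` is `σ_B`-approximated by values of `g` on `conv {xₙ}`,
which forces `f x₀ ≤ u`. -/

section

variable {E : Type*} [NormedAddCommGroup E] [NormedSpace ℝ E]

theorem closure_subset_sigmaClosure (B : Set (StrongDual ℝ E)) (S : Set E) :
    closure S ⊆ sigmaClosure B S := by
  intro x hx ε hε F _
  have hopen : IsOpen (⋂ f ∈ F, {y : E | |f x - f y| < ε}) :=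
    isOpen_biInter_finset fun f _ =>
      isOpen_lt (continuous_const.sub f.continuous).abs continuous_const
  obtain ⟨y, hy, hyS⟩ := mem_closure_iff.1 hx _ hopen (mem_iInter₂.2 fun f _ => by simpa)
  exact ⟨y, hyS, fun f hf => mem_iInter₂.1 hy f hf⟩

theorem convex_setOf_abs_apply_lt (v : E) (ε : ℝ) :
    Convex ℝ {φ : StrongDual ℝ E | |φ v| < ε} := by
  simpa [preimage, Real.dist_eq] using
    (convex_ball (0 : ℝ) ε).linear_preimage (ContinuousLinearMap.apply ℝ ℝ v).toLinearMap

theorem exists_abs_sub_lt_of_mem_sigmaClosure_of_mem_convexHull {B : Set (StrongDual ℝ E)}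
    {S : Set E} {x : E} (hx : x ∈ sigmaClosure B S) {g : StrongDual ℝ E}
    (hg : g ∈ convexHull ℝ B) {ε : ℝ} (hε : 0 < ε) : ∃ y ∈ S, |g x - g y| < ε := by
  rw [convexHull_eq_union_convexHull_finite_subsets, mem_iUnion₂] at hg
  obtain ⟨T, hTB, hgT⟩ := hg
  obtain ⟨y, hyS, hy⟩ := hx ε hε T hTB
  refine ⟨y, hyS, ?_⟩
  have hT : (T : Set (StrongDual ℝ E)) ⊆ {φ | |φ (x - y)| < ε} := fun φ hφ => by
    simpa [map_sub] using hy φ hφ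
  simpa [map_sub] using convexHull_min hT (convex_setOf_abs_apply_lt (x - y) ε) hgT

theorem le_of_mem_sigmaClosure_convexHull {A : Set E} (hA : A.Countable)
    (hAb : Bornology.IsBounded A) {B : Set (StrongDual ℝ E)} {x₀ : E}
    (hx₀ : x₀ ∈ sigmaClosure B (convexHull ℝ A)) {f : StrongDual ℝ E}
    (hf : f ∈ gammaClosure (convexHull ℝ B)) {u : ℝ} (hu : ∀ a ∈ A, f a ≤ u) :
    f x₀ ≤ u := by
  refine le_of_forall_pos_le_add fun ε hε => ?_
  obtain ⟨g, hgB, hfg⟩ := hf (ε / 3) (by positivity) (insert x₀ A)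
    (hA.insert x₀) (hAb.insert x₀)
  have hgA : ∀ a ∈ A, g a ≤ u + ε / 3 := fun a ha => by
    linarith [(abs_le.1 (hfg a (mem_insert_of_mem _ ha))).1, hu a ha]
  have hg_hull : ∀ y ∈ convexHull ℝ A, g y ≤ u + ε / 3 :=
    convexHull_min hgA (convex_halfSpace_le g.isLinear _)
  obtain ⟨y, hyA, hgy⟩ := exists_abs_sub_lt_of_mem_sigmaClosure_of_mem_convexHull hx₀ hgB
    (ε := ε / 3) (by positivity)
  linarith [(abs_le.1 (hfg x₀ (mem_insert _ _))).2, (abs_lt.1 hgy).2, hg_hull y hyA]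

theorem geometric_hahn_banach_closed_point_norm_le_one {s : Set E} (hs₁ : Convex ℝ s)
    (hs₂ : IsClosed s) {x : E} (hx : x ∉ s) :
    ∃ f : StrongDual ℝ E, ‖f‖ ≤ 1 ∧ ∃ u : ℝ, (∀ a ∈ s, f a < u) ∧ u < f x := by
  obtain ⟨f, u, hfs, hux⟩ := geometric_hahn_banach_closed_point hs₁ hs₂ hx
  set c := (‖f‖ + 1)⁻¹
  have hc : 0 < c := by positivity
  refine ⟨c • f, ?_, c * u, fun a ha => ?_, ?_⟩
  · rw [norm_smul, Real.norm_of_nonneg hc.le, inv_mul_le_iff₀ (by positivity)]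
    linarith
  · exact mul_lt_mul_of_pos_left (hfs a ha) hc
  · exact mul_lt_mul_of_pos_left hux hc

end

theorem sigma_hull_eq_norm_hull_general (x : ℕ → X) (C : ℝ) (hx : ∀ n, ‖x n‖ ≤ C)
    (B : Set (StrongDual ℝ X))
    (hdense : gammaClosure (convexHull ℝ B) = {f : StrongDual ℝ X | ‖f‖ ≤ 1}) :
    sigmaClosure B (convexHull ℝ (Set.range x)) =
      closure (convexHull ℝ (Set.range x)) := by
  refine Subset.antisymm (fun x₀ hx₀ => ?_) (closure_subset_sigmaClosure B _)
  by_contra hx₀K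
  obtain ⟨f, hf, u, hfK, hux₀⟩ := geometric_hahn_banach_closed_point_norm_le_one
    (convex_convexHull ℝ _).closure isClosed_closure hx₀K
  have hbdd : Bornology.IsBounded (range x) :=
    isBounded_iff_forall_norm_le.2 ⟨C, forall_mem_range.2 hx⟩
  have hfx₀ := le_of_mem_sigmaClosure_convexHull (countable_range x) hbdd hx₀
    (hdense ▸ hf : f ∈ gammaClosure (convexHull ℝ B))
    fun a ha => (hfK a (subset_closure (subset_convexHull ℝ _ ha))).le
  linarith

theorem sigma_hull_eq_norm_hull (x : ℕ → X) (C : ℝ) (hx : ∀ n, ‖x n‖ ≤ C)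
    (B : Set (StrongDual ℝ X)) (hB : ∀ f ∈ B, ‖f‖ ≤ 1)
    (hdense : gammaClosure (convexHull ℝ B) = {f : StrongDual ℝ X | ‖f‖ ≤ 1}) :
    sigmaClosure B (convexHull ℝ (Set.range x)) =
      closure (convexHull ℝ (Set.range x)) :=
  sigma_hull_eq_norm_hull_general x C hx B hdense
end
end

section
/- If X is a real Banach space containing an isomorphic copy of ℓ¹, then for every 0 < ε < 2 there exist sequences (x_n) in B_X and (x*_m) in B_{X*} such that lim_n lim_m x*_m(x_n) and lim_m lim_n x*_m(x_n) both exist and differ by more than ε; i.e., the statement B_X §ε§ B_{X*} is false for every 0 < ε < 2. -/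
noncomputable section
open Filter Topology Set NormedSpace Pointwise

variable {X : Type*} [NormedAddCommGroup X] [NormedSpace ℝ X] [CompleteSpace X]

/-- `X` contains an isomorphic copy of `ℓ¹`. -/
def ContainsL1 (X : Type*) [NormedAddCommGroup X] [NormedSpace ℝ X] : Prop :=
  ∃ T : lp (fun _ : ℕ => ℝ) 1 →L[ℝ] X, ∃ c > (0 : ℝ), ∀ y, c * ‖y‖ ≤ ‖T y‖

/-!
James' distortion argument. Suppose `(zᵢ)` lies in the unit ball and `c ∑ |aᵢ| ≤ ‖∑ aᵢ zᵢ‖`.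
Let `γ_N` be the best constant in `∑ |aᵢ| ≤ γ_N ‖∑ aᵢ zᵢ‖` for coefficients supported in
`[N, ∞)` and `γ = inf_N γ_N ≥ 1`. Fix `N₀` with `γ_{N₀} < γ + η`. Every tail still contains
vectors `∑ aᵢ zᵢ` of norm `≤ 1` with `∑ |aᵢ| > γ - η`; taking them with disjoint supports
beyond `N₀` yields a sequence `(w_k)` in the unit ball with `θ ∑ |b_k| ≤ ‖∑ b_k w_k‖`, where
`θ = (γ - η) / (γ + η)` is as close to `1` as we like.

On the span of such a sequence every `±θ` pattern of values on the `w_k` is a functional of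
norm `≤ 1`, so by Hahn–Banach there are `f_m ∈ B_{X*}` with `f_m(w_n) = θ` for `n ≤ m` and
`-θ` for `n > m`. The iterated limits are `θ` and `-θ`, and `2θ > ε` once `θ > ε / 2`.
-/

open Finsupp Function

section L1Sequences

variable {ι κ E : Type*} [NormedAddCommGroup E] [NormedSpace ℝ E]

def l1Norm (a : ι →₀ ℝ) : ℝ := a.sum fun _ t => |t|

lemma l1Norm_nonneg (a : ι →₀ ℝ) : 0 ≤ l1Norm a :=
  Finset.sum_nonneg fun _ _ => abs_nonneg _

lemma l1Norm_eq_zero_iff {a : ι →₀ ℝ} : l1Norm a = 0 ↔ a = 0 := by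
  refine ⟨fun h => ?_, fun h => by simp [h, l1Norm]⟩
  ext i
  by_contra hi
  have hsum := Finset.sum_eq_zero_iff_of_nonneg (fun j _ => abs_nonneg (a j)) |>.1 h
  exact hi (abs_eq_zero.1 (hsum i (mem_support_iff.2 hi)))

lemma l1Norm_single (i : ι) (t : ℝ) : l1Norm (single i t) = |t| :=
  sum_single_index abs_zero

lemma l1Norm_smul (r : ℝ) (a : ι →₀ ℝ) : l1Norm (r • a) = |r| * l1Norm a := by
  rw [l1Norm, sum_smul_index' (h := fun _ t => |t|) fun _ => abs_zero, l1Norm, Finsupp.mul_sum]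
  simp only [smul_eq_mul, abs_mul]

lemma l1Norm_sum_of_pairwise_disjoint (s : Finset κ) {f : κ → ι →₀ ℝ}
    (hf : Pairwise (Disjoint on fun k => (f k).support)) :
    l1Norm (∑ k ∈ s, f k) = ∑ k ∈ s, l1Norm (f k) := by
  classical
  induction s using Finset.induction_on with
  | empty => simp [l1Norm]
  | insert k s hk ih =>
    have hdisj : Disjoint (f k).support (∑ j ∈ s, f j).support :=
      Finset.disjoint_of_subset_right support_finsetSum <|
        (Finset.disjoint_biUnion_right _ _ _).2 fun j hj => hf (ne_of_mem_of_not_mem hj hk).symm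
    rw [Finset.sum_insert hk, Finset.sum_insert hk, ← ih]
    exact sum_add_index_of_disjoint hdisj _

lemma norm_linearCombination_le {z : ι → E} {C : ℝ} (hz : ∀ i, ‖z i‖ ≤ C) (a : ι →₀ ℝ) :
    ‖linearCombination ℝ z a‖ ≤ C * l1Norm a := by
  rw [linearCombination_apply, l1Norm, Finsupp.mul_sum]
  refine (norm_sum_le _ _).trans (Finset.sum_le_sum fun i _ => ?_)
  rw [norm_smul, Real.norm_eq_abs, mul_comm]
  exact mul_le_mul_of_nonneg_right (hz i) (abs_nonneg _)

lemma lp.norm_linearCombination_single [DecidableEq ι] (a : ι →₀ ℝ) :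
    ‖linearCombination ℝ (fun i => lp.single (E := fun _ : ι => ℝ) 1 i 1) a‖ = l1Norm a := by
  have h := lp.norm_sum_single (E := fun _ : ι => ℝ) (p := 1) (by norm_num) a a.support
  simp only [ENNReal.toReal_one, Real.rpow_one, Real.norm_eq_abs] at h
  rw [linearCombination_apply, l1Norm, Finsupp.sum, Finsupp.sum, ← h]
  simp_rw [← lp.single_smul, smul_eq_mul, mul_one]

section LowerBound

variable {θ : ℝ} {z : ι → E}

def HasL1LowerBound (θ : ℝ) (z : ι → E) : Prop :=
  ∀ a : ι →₀ ℝ, θ * l1Norm a ≤ ‖linearCombination ℝ z a‖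

lemma HasL1LowerBound.mono {θ' : ℝ} (hz : HasL1LowerBound θ z) (h : θ' ≤ θ) :
    HasL1LowerBound θ' z := fun a =>
  (mul_le_mul_of_nonneg_right h (l1Norm_nonneg a)).trans (hz a)

lemma HasL1LowerBound.linearIndependent (hz : HasL1LowerBound θ z) (hθ : 0 < θ) :
    LinearIndependent ℝ z := by
  refine linearIndependent_iff.2 fun a ha => l1Norm_eq_zero_iff.1 ?_
  have h := hz a
  rw [ha, norm_zero] at h
  exact le_antisymm (nonpos_of_mul_nonpos_right h hθ) (l1Norm_nonneg a)

theorem HasL1LowerBound.exists_dual_apply_eq (hz : HasL1LowerBound θ z) (hθ : 0 < θ)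
    {s : ι → ℝ} (hs : ∀ i, |s i| ≤ θ) :
    ∃ g : StrongDual ℝ E, ‖g‖ ≤ 1 ∧ ∀ i, g (z i) = s i := by
  have hli := hz.linearIndependent hθ
  let φ : Submodule.span ℝ (range z) →ₗ[ℝ] ℝ := linearCombination ℝ s ∘ₗ hli.repr
  have hφ : ∀ x, ‖φ x‖ ≤ 1 * ‖x‖ := fun x => calc
    ‖φ x‖ ≤ θ * l1Norm (hli.repr x) := norm_linearCombination_le hs _
    _ ≤ ‖linearCombination ℝ z (hli.repr x)‖ := hz _
    _ = 1 * ‖x‖ := by rw [hli.linearCombination_repr, one_mul]; rfl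
  obtain ⟨g, hg, hgnorm⟩ := exists_extension_norm_eq _ (φ.mkContinuous 1 hφ)
  refine ⟨g, hgnorm ▸ LinearMap.mkContinuous_norm_le _ zero_le_one _, fun i => ?_⟩
  have hzi : z i ∈ Submodule.span ℝ (range z) := Submodule.subset_span (mem_range_self i)
  rw [show z i = ((⟨z i, hzi⟩ : Submodule.span ℝ (range z)) : E) from rfl, hg]
  simp [φ, hli.repr_eq_single i ⟨z i, hzi⟩ rfl]

theorem hasL1LowerBound_of_disjoint_blocks {S : Set ι} {m : ℝ} (hθ : 0 ≤ θ)
    (hz : ∀ a : ι →₀ ℝ, ↑a.support ⊆ S → θ * l1Norm a ≤ ‖linearCombination ℝ z a‖)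
    {a : κ → ι →₀ ℝ} (haS : ∀ k, ↑(a k).support ⊆ S)
    (hdisj : Pairwise (Disjoint on fun k => (a k).support)) (hm : ∀ k, m ≤ l1Norm (a k)) :
    HasL1LowerBound (θ * m) fun k => linearCombination ℝ z (a k) := by
  classical
  intro b
  rw [← linearCombination_linearCombination]
  have hA : linearCombination ℝ a b = ∑ k ∈ b.support, b k • a k := linearCombination_apply _ _
  have hnorm : l1Norm (linearCombination ℝ a b) = ∑ k ∈ b.support, |b k| * l1Norm (a k) := by
    rw [hA, l1Norm_sum_of_pairwise_disjoint _
      (hdisj.mono fun _ _ h => h.mono support_smul support_smul)]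
    simp only [l1Norm_smul]
  have hsupp : ↑(linearCombination ℝ a b).support ⊆ S := by
    rw [hA]
    refine (Finset.coe_subset.2 support_finsetSum).trans ?_
    simpa using fun k _ => (Finset.coe_subset.2 support_smul).trans (haS k)
  calc θ * m * l1Norm b = θ * ∑ k ∈ b.support, |b k| * m := by
        rw [l1Norm, Finsupp.sum, Finset.mul_sum, Finset.mul_sum]
        exact Finset.sum_congr rfl fun _ _ => by ring
    _ ≤ θ * l1Norm (linearCombination ℝ a b) := by
        rw [hnorm]; gcongr with k; exact hm k
    _ ≤ _ := hz _ hsupp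

end LowerBound

lemma exists_seq_pairwise_disjoint_of_forall_exists {α : Type*} (s : α → Finset ℕ)
    {P : α → Prop} (h : ∀ M, ∃ x, (s x : Set ℕ) ⊆ Ici M ∧ P x) (N : ℕ) :
    ∃ x : ℕ → α, Pairwise (Disjoint on fun k => s (x k)) ∧
      ∀ k, (s (x k) : Set ℕ) ⊆ Ici N ∧ P (x k) := by
  choose y hy hP using h
  let start : ℕ → ℕ := fun k => Nat.rec N (fun _ M => max M ((s (y M)).sup id) + 1) k
  have hstart : StrictMono start :=
    strictMono_nat_of_lt_succ fun k => Nat.lt_succ_of_le (le_max_left _ _)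
  have hIco : ∀ k, (s (y (start k)) : Set ℕ) ⊆ Ico (start k) (start (k + 1)) := fun k i hi =>
    ⟨hy _ hi, Nat.lt_succ_of_le ((Finset.le_sup (f := id) hi).trans (le_max_right _ _))⟩
  refine ⟨fun k => y (start k), (pairwise_disjoint_on _).2 fun j k hjk => ?_, fun k => ⟨?_, hP _⟩⟩
  · refine Finset.disjoint_left.2 fun i hj hk => lt_irrefl i ?_
    exact (hIco j hj).2.trans_le ((hstart.le_iff_le.2 hjk).trans (hIco k hk).1)
  · exact (hy _).trans (Ici_subset_Ici.2 (hstart.monotone (Nat.zero_le k)))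

section TailConstant

variable {z : ℕ → E} {c : ℝ}

def tailUnitBall (z : ℕ → E) (N : ℕ) : Set (ℕ →₀ ℝ) :=
  {a | ↑a.support ⊆ Ici N ∧ ‖linearCombination ℝ z a‖ ≤ 1}

/-- James' constant `γ_N`: the best `γ` with `∑ |aᵢ| ≤ γ ‖∑ aᵢ zᵢ‖` for `a` supported in
`[N, ∞)`. -/
def tailL1Const (z : ℕ → E) (N : ℕ) : ℝ :=
  sSup (l1Norm '' tailUnitBall z N)

lemma bddAbove_l1Norm_image_tailUnitBall (hz : HasL1LowerBound c z) (hc : 0 < c) (N : ℕ) :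
    BddAbove (l1Norm '' tailUnitBall z N) := by
  refine ⟨c⁻¹, ?_⟩
  rintro _ ⟨a, ⟨-, ha⟩, rfl⟩
  rw [← one_div, le_div_iff₀ hc, mul_comm]
  exact (hz a).trans ha

lemma one_le_tailL1Const (hz : HasL1LowerBound c z) (hc : 0 < c) (hz1 : ∀ i, ‖z i‖ ≤ 1)
    (N : ℕ) : 1 ≤ tailL1Const z N := by
  refine le_csSup (bddAbove_l1Norm_image_tailUnitBall hz hc N) ⟨single N 1, ⟨?_, ?_⟩, ?_⟩
  · exact (Finset.coe_subset.2 support_single_subset).trans (by simp)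
  · simpa using hz1 N
  · simp [l1Norm_single]

lemma exists_lt_l1Norm_of_lt_tailL1Const {N : ℕ} {t : ℝ} (ht : t < tailL1Const z N) :
    ∃ a : ℕ →₀ ℝ, ↑a.support ⊆ Ici N ∧ ‖linearCombination ℝ z a‖ ≤ 1 ∧ t < l1Norm a := by
  obtain ⟨_, ⟨a, ⟨haN, ha⟩, rfl⟩, hta⟩ :=
    exists_lt_of_lt_csSup (Nonempty.image _ ⟨0, by simp [tailUnitBall]⟩) ht
  exact ⟨a, haN, ha, hta⟩

lemma inv_tailL1Const_mul_l1Norm_le (hz : HasL1LowerBound c z) (hc : 0 < c)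
    (hz1 : ∀ i, ‖z i‖ ≤ 1) {N : ℕ} {a : ℕ →₀ ℝ} (ha : ↑a.support ⊆ Ici N) :
    (tailL1Const z N)⁻¹ * l1Norm a ≤ ‖linearCombination ℝ z a‖ := by
  rw [inv_mul_le_iff₀ (zero_lt_one.trans_le (one_le_tailL1Const hz hc hz1 N))]
  set v := linearCombination ℝ z a
  rcases (norm_nonneg v).eq_or_lt with hv | hv
  · have h := hz a
    rw [← hv] at h ⊢
    rw [mul_zero]
    exact nonpos_of_mul_nonpos_right h hc
  · have hle : l1Norm (‖v‖⁻¹ • a) ≤ tailL1Const z N := by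
      refine le_csSup (bddAbove_l1Norm_image_tailUnitBall hz hc N) ⟨_, ⟨?_, ?_⟩, rfl⟩
      · exact (Finset.coe_subset.2 support_smul).trans ha
      · rw [map_smul, norm_smul, norm_inv, norm_norm, inv_mul_cancel₀ hv.ne']
    rwa [l1Norm_smul, abs_inv, abs_norm, inv_mul_le_iff₀ hv, mul_comm] at hle

theorem HasL1LowerBound.exists_hasL1LowerBound_of_lt_one (hz : HasL1LowerBound c z)
    (hc : 0 < c) (hz1 : ∀ i, ‖z i‖ ≤ 1) {θ : ℝ} (hθ : θ < 1) :
    ∃ w : ℕ → E, (∀ k, ‖w k‖ ≤ 1) ∧ HasL1LowerBound θ w := by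
  set γ := iInf (tailL1Const z)
  have hγ1 : 1 ≤ γ := le_ciInf (one_le_tailL1Const hz hc hz1)
  have hγ : ∀ N, γ ≤ tailL1Const z N :=
    ciInf_le ⟨1, forall_mem_range.2 (one_le_tailL1Const hz hc hz1)⟩
  set η := (1 - θ) / 2 with hη
  obtain ⟨N₀, hN₀⟩ := exists_lt_of_ciInf_lt (show γ < γ + η by linarith)
  obtain ⟨a, hdisj, ha⟩ := exists_seq_pairwise_disjoint_of_forall_exists Finsupp.support
    (fun M => exists_lt_l1Norm_of_lt_tailL1Const (z := z) (t := γ - η) (by linarith [hγ M])) N₀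
  refine ⟨fun k => linearCombination ℝ z (a k), fun k => (ha k).2.1, ?_⟩
  refine (hasL1LowerBound_of_disjoint_blocks (inv_nonneg.2 (by linarith [hγ N₀]))
    (fun b hb => inv_tailL1Const_mul_l1Norm_le hz hc hz1 hb) (fun k => (ha k).1) hdisj
    (fun k => (ha k).2.2.le)).mono ?_
  rw [inv_mul_eq_div, le_div_iff₀ (by linarith [hγ N₀])]
  rcases le_or_gt 0 θ with hθ0 | hθ0
  · nlinarith [mul_le_mul_of_nonneg_left hN₀.le hθ0,
      mul_nonneg (sub_nonneg.2 hγ1) (sub_nonneg.2 hθ.le)]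
  · nlinarith [mul_le_mul_of_nonpos_left (hγ N₀) hθ0.le]

end TailConstant

theorem ContainsL1.exists_hasL1LowerBound (hE : ContainsL1 E) :
    ∃ z : ℕ → E, ∃ c > 0, (∀ i, ‖z i‖ ≤ 1) ∧ HasL1LowerBound c z := by
  obtain ⟨T, c, hc, hT⟩ := hE
  set e := fun i : ℕ => lp.single (E := fun _ : ℕ => ℝ) 1 i (1 : ℝ)
  have he : ∀ i, ‖e i‖ = 1 := fun i => by simp [e, lp.norm_single]
  have hTpos : 0 < ‖T‖ := by
    have h := (hT (e 0)).trans (T.le_opNorm (e 0))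
    rw [he, mul_one, mul_one] at h
    exact hc.trans_le h
  refine ⟨fun i => (‖T‖⁻¹ • T) (e i), c / ‖T‖, div_pos hc hTpos, fun i => ?_, fun a => ?_⟩
  · calc ‖(‖T‖⁻¹ • T) (e i)‖ ≤ ‖‖T‖⁻¹ • T‖ * ‖e i‖ := ContinuousLinearMap.le_opNorm _ _
      _ ≤ 1 := by rw [he, mul_one, norm_smul, norm_inv, norm_norm, inv_mul_cancel₀ hTpos.ne']
  · rw [← Function.comp_def (‖T‖⁻¹ • T), ← ContinuousLinearMap.coe_coe,
      ← apply_linearCombination, ContinuousLinearMap.coe_coe, _root_.smul_apply,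
      norm_smul, norm_inv, norm_norm, ← lp.norm_linearCombination_single, div_eq_inv_mul, mul_assoc]
    exact mul_le_mul_of_nonneg_left (hT _) (inv_nonneg.2 (norm_nonneg _))

end L1Sequences

theorem l1_bad_double_limits (hX : ContainsL1 X) :
    ∀ ε : ℝ, 0 < ε → ε < 2 →
      ∃ (x : ℕ → X) (f : ℕ → StrongDual ℝ X) (u v : ℕ → ℝ) (l L : ℝ),
        (∀ n, ‖x n‖ ≤ 1) ∧ (∀ m, ‖f m‖ ≤ 1) ∧
        (∀ n, Tendsto (fun m => f m (x n)) atTop (𝓝 (u n))) ∧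
        Tendsto u atTop (𝓝 l) ∧
        (∀ m, Tendsto (fun n => f m (x n)) atTop (𝓝 (v m))) ∧
        Tendsto v atTop (𝓝 L) ∧
        ε < |l - L| := by
  intro ε hε0 hε2
  set θ : ℝ := (ε + 2) / 4 with hθ
  have hθ0 : 0 < θ := by positivity
  obtain ⟨z, c, hc, hz1, hz⟩ := hX.exists_hasL1LowerBound
  obtain ⟨w, hw1, hw⟩ := hz.exists_hasL1LowerBound_of_lt_one hc hz1 (show θ < 1 by linarith)
  choose f hf1 hfw using fun m : ℕ => hw.exists_dual_apply_eq hθ0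
    (s := fun n => if n ≤ m then θ else -θ) fun n => by split_ifs <;> simp [abs_of_pos hθ0]
  refine ⟨w, f, fun _ => θ, fun _ => -θ, θ, -θ, hw1, hf1, fun n => ?_, tendsto_const_nhds,
    fun m => ?_, tendsto_const_nhds, ?_⟩
  · refine tendsto_const_nhds.congr' ?_
    filter_upwards [eventually_ge_atTop n] with m hm
    simp [hfw, hm]
  · refine tendsto_const_nhds.congr' ?_
    filter_upwards [eventually_gt_atTop m] with n hn
    simp [hfw, hn.not_ge]
  · rw [sub_neg_eq_add, abs_of_pos (by positivity)]
    linarith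
end
end
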